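/- arXiv:2203.03044 — 7 statements merged into one kernel-verified Lean document; each statement's English description precedes it below -/
import Mathlib

section
/- There exists v* ∈ (0,r] such that Π*(v*) > 0; that is, by choosing the acquisition price appropriately, the speculator obtains a strictly positive expected profit in the second-price procurement auction. -/
open MeasureTheory Set

/-- Second-price acquisition price: `p*(v) = v + ∫_v^r (1−F x)^(N−1) dx`. -/
noncomputable def pstar (F : ℝ → ℝ) (N : ℕ) (r : ℝ) (v : ℝ) : ℝ :=
  v + ∫ x in v..r, (1 - F x) ^ (N - 1)

/-- Speculator's expected payment from a second-price subgame against `m` sellers. -/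
noncomputable def y (F : ℝ → ℝ) (r : ℝ) (m : ℕ) (v : ℝ) : ℝ :=
  v + ∫ x in v..r, ((1 - F x) / (1 - F v)) ^ m

/-- Speculator's expected profit in the second-price speculation game at cutoff `v`. -/
noncomputable def PiSPA (F : ℝ → ℝ) (N : ℕ) (r : ℝ) (v : ℝ) : ℝ :=
  (∑ m ∈ Finset.range N,
      (N.choose m : ℝ) * (F v) ^ (N - m) * (1 - F v) ^ m * y F r m v)
    - N * F v * pstar F N r v

lemma bern_aux (n : ℕ) (hn : 2 ≤ n) (x : ℝ) (hx0 : 0 ≤ x) (hx1 : x ≤ 1) :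
    (1 - x)^n ≤ 1 - n*x + (n.choose 2 : ℝ) * x^2 := by
  induction n, hn using Nat.le_induction with
  | base => norm_num; nlinarith
  | succ n hn ih =>
    have h1 : (0:ℝ) ≤ 1 - x := by linarith
    have h3 : (1-x)*(1-x)^n ≤ (1-x)*(1 - n*x + (n.choose 2:ℝ)*x^2) :=
      mul_le_mul_of_nonneg_left ih h1
    have h4 : ((n+1).choose 2 : ℝ) = n + (n.choose 2 : ℝ) := by
      rw [Nat.choose_succ_succ n 1, Nat.choose_one_right]; push_cast; ring
    have hC : (0:ℝ) ≤ (n.choose 2 : ℝ) := Nat.cast_nonneg _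
    have h5 : (1-x)^(n+1) = (1-x)*(1-x)^n := by ring
    push_cast
    nlinarith [mul_nonneg hC (pow_nonneg hx0 3)]

set_option maxHeartbeats 1000000 in
theorem speculation_profitable_SPA
    (F : ℝ → ℝ) (N : ℕ) (hN : 2 ≤ N)
    (hFcont : Continuous F) (hFmono : Monotone F)
    (hF0 : F 0 = 0) (hFpos : ∀ v ∈ Ioc (0 : ℝ) 1, 0 < F v)
    (hFlt1 : ∀ v ∈ Ico (0 : ℝ) 1, F v < 1) (hF1 : F 1 = 1)
    (r : ℝ) (hr : r ∈ Ioc (0 : ℝ) 1) :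
    ∃ v ∈ Ioc (0 : ℝ) r, 0 < PiSPA F N r v := by
  obtain ⟨hr0, hr1⟩ := hr
  obtain ⟨K, rfl⟩ : ∃ K, N = K + 2 := ⟨N - 2, by omega⟩
  set c : ℝ := (1 - F (r/2))^K with hc_def
  have hFr2 : F (r/2) < 1 := hFlt1 _ ⟨by linarith, by linarith⟩
  have hFr2' : 0 ≤ F (r/2) := hF0 ▸ hFmono (by linarith)
  have hc : 0 < c := pow_pos (by linarith) K
  set v : ℝ := c * r / (4 * (1 + c)) with hv_def
  have hv0 : 0 < v := by positivity
  have hvr4 : v ≤ r / 4 := by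
    rw [hv_def, div_le_div_iff₀ (by positivity) (by norm_num)]
    nlinarith
  have hvr2 : v < r / 2 := by linarith
  have hvr : v ≤ r := by linarith
  refine ⟨v, ⟨hv0, hvr⟩, ?_⟩
  have ha0 : 0 < F v := hFpos v ⟨hv0, by linarith⟩
  have ha1 : F v < 1 := hFlt1 v ⟨le_of_lt hv0, by linarith⟩
  have hF_le1 : ∀ x : ℝ, x ≤ 1 → F x ≤ 1 := fun x hx => hF1 ▸ hFmono hx
  set a := F v with ha_def
  set I : ℕ → ℝ := fun m => ∫ x in v..r, (1 - F x)^m with hI_def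
  have hint : ∀ (m : ℕ) (p q : ℝ), IntervalIntegrable (fun x => (1-F x)^m) volume p q :=
    fun m p q => (((continuous_const.sub hFcont).pow m)).intervalIntegrable p q
  have hInonneg : ∀ m, 0 ≤ I m := by
    intro m
    apply intervalIntegral.integral_nonneg hvr
    intro x hx
    have : F x ≤ 1 := hF_le1 x (le_trans hx.2 hr1)
    exact pow_nonneg (by linarith) m
  have hane : (1 - a) ≠ 0 := ne_of_gt (by linarith)
  have hy : ∀ m : ℕ, y F r m v = v + I m / (1-a)^m := by
    intro m
    unfold y
    rw [← ha_def]
    congr 1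
    rw [← intervalIntegral.integral_div]
    apply intervalIntegral.integral_congr
    intro x _
    simp [div_pow]
  -- the structural identity
  have hterm : ∀ m ∈ Finset.range (K+2),
      ((K+2).choose m : ℝ) * a^(K+2-m) * (1-a)^m * y F r m v
      = ((K+2).choose m : ℝ) * a^(K+2-m) * (1-a)^m * v
        + ((K+2).choose m : ℝ) * a^(K+2-m) * I m := by
    intro m _
    rw [hy m, mul_add]
    congr 1
    rw [div_eq_mul_inv]
    have : (1-a)^m * (I m * ((1-a)^m)⁻¹) = I m := by
      field_simp
    calc ((K+2).choose m : ℝ) * a^(K+2-m) * (1-a)^m * (I m * ((1-a)^m)⁻¹)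
        = ((K+2).choose m : ℝ) * a^(K+2-m) * ((1-a)^m * (I m * ((1-a)^m)⁻¹)) := by ring
      _ = _ := by rw [this]
  have hS1full : ∑ m ∈ Finset.range (K+3), ((K+2).choose m:ℝ) * a^(K+2-m) * (1-a)^m = 1 := by
    calc ∑ m ∈ Finset.range (K+3), ((K+2).choose m:ℝ) * a^(K+2-m) * (1-a)^m
        = ∑ m ∈ Finset.range (K+2+1), (1-a)^m * a^(K+2-m) * ((K+2).choose m:ℝ) := by
          apply Finset.sum_congr rfl; intro m _; ring
      _ = ((1-a)+a)^(K+2) := (add_pow _ _ _).symm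
      _ = 1 := by norm_num
  have hS1 : ∑ m ∈ Finset.range (K+2), ((K+2).choose m:ℝ) * a^(K+2-m) * (1-a)^m
      = 1 - (1-a)^(K+2) := by
    rw [Finset.sum_range_succ] at hS1full
    simp only [Nat.choose_self, Nat.cast_one, Nat.sub_self, pow_zero, one_mul, mul_one] at hS1full
    linarith
  have hPi : PiSPA F (K+2) r v
      = v * (1 - (1-a)^(K+2) - (K+2)*a)
        + ∑ m ∈ Finset.range (K+1), ((K+2).choose m : ℝ) * a^(K+2-m) * I m := by
    unfold PiSPA pstar
    rw [← ha_def, Finset.sum_congr rfl hterm, Finset.sum_add_distrib]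
    have e1 : ∑ m ∈ Finset.range (K+2), ((K+2).choose m:ℝ)*a^(K+2-m)*(1-a)^m * v
        = (1 - (1-a)^(K+2)) * v := by
      rw [← Finset.sum_mul, hS1]
    have e2 : ∑ m ∈ Finset.range (K+2), ((K+2).choose m:ℝ)*a^(K+2-m)* I m
        = (∑ m ∈ Finset.range (K+1), ((K+2).choose m:ℝ)*a^(K+2-m)* I m)
          + (K+2)*a*I (K+1) := by
      rw [Finset.sum_range_succ]
      congr 1
      have hcs : ((K+2).choose (K+1) : ℝ) = (K+2 : ℝ) := by
        rw [Nat.choose_succ_self_right]; push_cast; ring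
      have hexp : K+2-(K+1) = 1 := by omega
      rw [hcs, hexp, pow_one]
    rw [e1, e2]
    have e3 : (∫ x in v..r, (1-F x)^(K+2-1)) = I (K+1) := by
      norm_num [hI_def]
    rw [e3]
    push_cast
    ring
  -- lower bound for I K
  have hIK : c * (r/2 - v) ≤ I K := by
    have h1 : (∫ x in v..r/2, (1-F x)^K) + (∫ x in (r/2)..r, (1-F x)^K) = I K :=
      intervalIntegral.integral_add_adjacent_intervals (hint K v (r/2)) (hint K (r/2) r)
    have h2 : 0 ≤ ∫ x in (r/2)..r, (1-F x)^K := by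
      apply intervalIntegral.integral_nonneg (by linarith)
      intro x hx
      have : F x ≤ 1 := hF_le1 x (le_trans hx.2 hr1)
      exact pow_nonneg (by linarith) K
    have h3 : (∫ _x in v..r/2, c) ≤ ∫ x in v..r/2, (1-F x)^K := by
      apply intervalIntegral.integral_mono_on (by linarith) intervalIntegrable_const (hint K v (r/2))
      intro x hx
      exact pow_le_pow_left₀ (by linarith) (by have := hFmono hx.2; linarith) K
    rw [intervalIntegral.integral_const, smul_eq_mul] at h3
    nlinarith
  -- Bernoulli bound
  have hBern : (1-a)^(K+2) ≤ 1 - (K+2)*a + ((K+2).choose 2 : ℝ) * a^2 := by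
    have := bern_aux (K+2) (by omega) a ha0.le ha1.le
    push_cast at this ⊢
    linarith
  -- split off the m = K term
  have hsplit : ∑ m ∈ Finset.range (K+1), ((K+2).choose m : ℝ) * a^(K+2-m) * I m
      = (∑ m ∈ Finset.range K, ((K+2).choose m : ℝ) * a^(K+2-m) * I m)
        + ((K+2).choose 2 : ℝ) * a^2 * I K := by
    rw [Finset.sum_range_succ]
    have hcK : (K+2).choose K = (K+2).choose 2 := by
      have h := Nat.choose_symm (show 2 ≤ K+2 by omega)
      rwa [show K+2-2 = K by omega] at h
    rw [hcK, show K+2-K = 2 by omega]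
  have hrest : 0 ≤ ∑ m ∈ Finset.range K, ((K+2).choose m : ℝ) * a^(K+2-m) * I m := by
    apply Finset.sum_nonneg
    intro m _
    have := hInonneg m
    positivity
  set C2 : ℝ := ((K+2).choose 2 : ℝ) with hC2_def
  have hC2pos : (0:ℝ) < C2 := by
    rw [hC2_def]
    have : 0 < (K+2).choose 2 := Nat.choose_pos (by omega)
    exact_mod_cast this
  have hIKv : c*r/4 ≤ I K - v := by
    have : c * (r/2 - v) - v = c*r/2 - (1+c)*v := by ring
    have hv' : (1+c)*v = c*r/4 := by
      rw [hv_def]; field_simp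
    nlinarith
  have hT : -(C2*a^2) ≤ 1 - (1-a)^(K+2) - ((K:ℝ)+2)*a := by
    rw [hC2_def]; push_cast at hBern ⊢; linarith
  have hvT : v * -(C2*a^2) ≤ v * (1 - (1-a)^(K+2) - ((K:ℝ)+2)*a) :=
    mul_le_mul_of_nonneg_left hT hv0.le
  have hIK2 : C2*a^2*(c*r/4) ≤ C2*a^2*(I K - v) :=
    mul_le_mul_of_nonneg_left hIKv (by positivity)
  have hpos : 0 < C2*a^2*(c*r/4) := by positivity
  rw [hPi, hsplit]
  push_cast
  nlinarith
end

section
/- As v* → 0⁺, the speculator's expected profit in the second-price auction satisfies lim_{v*→0⁺} Π*(v*)/[F(v*)]² = C(N,2) ∫₀^r (1−F(x))^{N−2} dx, and this limit is strictly positive. -/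
open MeasureTheory Set Filter

/-- Auxiliary: the integral `∫_v^r (1-F x)^m dx`. -/
noncomputable def Iaux (F : ℝ → ℝ) (r : ℝ) (m : ℕ) (v : ℝ) : ℝ :=
  ∫ x in v..r, (1 - F x) ^ m

lemma Iaux_continuous (F : ℝ → ℝ) (hF : Continuous F) (r : ℝ) (m : ℕ) :
    Continuous (Iaux F r m) := by
  have hint : ∀ a b : ℝ, IntervalIntegrable (fun x => (1 - F x) ^ m) volume a b :=
    fun a b => ((continuous_const.sub hF).pow m).intervalIntegrable a b
  have h1 : Continuous fun b => ∫ x in r..b, (1 - F x) ^ m :=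
    intervalIntegral.continuous_primitive hint r
  have heq : Iaux F r m = fun v => -∫ x in r..v, (1 - F x) ^ m := by
    funext v
    rw [Iaux, intervalIntegral.integral_symm]
  rw [heq]
  exact h1.neg

/-- The polynomial `h q = ∑_{j<n+1} C(n+2, j+2)(-1)^j q^j` with `h 0 = C(n+2,2)`. -/
noncomputable def haux (n : ℕ) (q : ℝ) : ℝ :=
  ∑ j ∈ Finset.range (n + 1), ((n + 2).choose (j + 2) : ℝ) * (-1) ^ j * q ^ j

lemma haux_continuous (n : ℕ) : Continuous (haux n) := by
  apply continuous_finset_sum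
  intro j _
  exact continuous_const.mul (continuous_pow j)

lemma haux_zero (n : ℕ) : haux n 0 = ((n + 2).choose 2 : ℝ) := by
  rw [haux, Finset.sum_eq_single 0]
  · simp
  · intro b _ hb
    simp [zero_pow hb]
  · simp

/-- Binomial factorization: `(1-q)^(n+2) = q^2 * haux n q - (n+2) q + 1`. -/
lemma haux_key (n : ℕ) (q : ℝ) :
    (1 - q) ^ (n + 2) = q ^ 2 * haux n q - (n + 2) * q + 1 := by
  have h0 : (1 - q) ^ (n + 2) = (-q + 1) ^ (n + 2) := by ring_nf
  rw [h0, add_pow]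
  rw [Finset.sum_range_succ' _ (n + 2), Finset.sum_range_succ' _ (n + 1)]
  have hterm : ∀ j ∈ Finset.range (n + 1),
      (-q) ^ (j + 1 + 1) * (1 : ℝ) ^ (n + 2 - (j + 1 + 1)) * ((n + 2).choose (j + 1 + 1) : ℝ)
        = q ^ 2 * (((n + 2).choose (j + 2) : ℝ) * (-1) ^ j * q ^ j) := by
    intro j _
    have h3 : (-q) ^ (j + 1 + 1) = (-1 : ℝ) ^ j * q ^ j * q ^ 2 := by
      rw [pow_add, pow_add, neg_pow, neg_pow, neg_pow]
      ring
    rw [h3]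
    ring
  rw [Finset.sum_congr rfl hterm, ← Finset.mul_sum, ← haux]
  norm_num [Nat.choose_one_right]
  ring

theorem PiSPA_limit_at_zero
    (F : ℝ → ℝ) (N : ℕ) (hN : 2 ≤ N)
    (hFcont : Continuous F) (hFmono : Monotone F)
    (hF0 : F 0 = 0) (hFpos : ∀ v ∈ Ioc (0 : ℝ) 1, 0 < F v)
    (hFlt1 : ∀ v ∈ Ico (0 : ℝ) 1, F v < 1) (hF1 : F 1 = 1)
    (r : ℝ) (hr : r ∈ Ioc (0 : ℝ) 1) :
    Tendsto (fun v => PiSPA F N r v / (F v) ^ 2) (nhdsWithin 0 (Ioi 0))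
      (nhds ((N.choose 2 : ℝ) * ∫ x in (0 : ℝ)..r, (1 - F x) ^ (N - 2))) ∧
    0 < (N.choose 2 : ℝ) * ∫ x in (0 : ℝ)..r, (1 - F x) ^ (N - 2) := by
  obtain ⟨n, rfl⟩ : ∃ n, N = n + 2 := ⟨N - 2, by omega⟩
  have hint : ∀ (m : ℕ) (a b : ℝ), IntervalIntegrable (fun x => (1 - F x) ^ m) volume a b :=
    fun m a b => ((continuous_const.sub hFcont).pow m).intervalIntegrable a b
  -- positivity of the limit
  have hposlim : 0 < ((n + 2).choose 2 : ℝ) * ∫ x in (0 : ℝ)..r, (1 - F x) ^ (n + 2 - 2) := by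
    apply mul_pos
    · exact_mod_cast Nat.choose_pos hN
    · apply intervalIntegral.intervalIntegral_pos_of_pos_on (hint _ 0 r) _ hr.1
      intro x hx
      have hx1 : F x < 1 := hFlt1 x ⟨hx.1.le, lt_of_lt_of_le hx.2 hr.2⟩
      exact pow_pos (by linarith) _
  refine ⟨?_, hposlim⟩
  -- the key algebraic expansion
  have expand : ∀ v : ℝ, F v < 1 →
      PiSPA F (n + 2) r v
        = v * (1 - (1 - F v) ^ (n + 2) - (n + 2) * F v)
          + ∑ m ∈ Finset.range (n + 1),
              ((n + 2).choose m : ℝ) * (F v) ^ (n + 2 - m) * Iaux F r m v := by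
    intro v hv1
    have hq1 : (1 : ℝ) - F v ≠ 0 := by linarith
    have hy : ∀ m : ℕ, y F r m v = v + Iaux F r m v / (1 - F v) ^ m := by
      intro m
      rw [y, Iaux]
      congr 1
      simp_rw [div_pow]
      rw [intervalIntegral.integral_div]
    have hterm : ∀ m ∈ Finset.range (n + 2),
        ((n + 2).choose m : ℝ) * (F v) ^ (n + 2 - m) * (1 - F v) ^ m
            * (v + Iaux F r m v / (1 - F v) ^ m)
          = ((n + 2).choose m : ℝ) * (F v) ^ (n + 2 - m) * (1 - F v) ^ m * v
            + ((n + 2).choose m : ℝ) * (F v) ^ (n + 2 - m) * Iaux F r m v := by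
      intro m _
      have hpm : ((1 : ℝ) - F v) ^ m ≠ 0 := pow_ne_zero m hq1
      field_simp
    have hbin : ∑ m ∈ Finset.range (n + 2 + 1),
        ((n + 2).choose m : ℝ) * (F v) ^ (n + 2 - m) * (1 - F v) ^ m = 1 := by
      have h1 := add_pow (1 - F v) (F v) (n + 2)
      have h2 : (1 - F v + F v : ℝ) = 1 := by ring
      rw [h2, one_pow] at h1
      conv_rhs => rw [h1]
      exact Finset.sum_congr rfl fun m _ => by ring
    rw [PiSPA, pstar]
    simp_rw [hy]
    rw [Finset.sum_congr rfl hterm, Finset.sum_add_distrib]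
    have hS1 : ∑ m ∈ Finset.range (n + 2),
        ((n + 2).choose m : ℝ) * (F v) ^ (n + 2 - m) * (1 - F v) ^ m * v
          = (1 - (1 - F v) ^ (n + 2)) * v := by
      rw [← Finset.sum_mul]
      congr 1
      have := Finset.sum_range_succ
        (fun m => ((n + 2).choose m : ℝ) * (F v) ^ (n + 2 - m) * (1 - F v) ^ m) (n + 2)
      rw [hbin] at this
      simp only [Nat.choose_self, Nat.cast_one, Nat.sub_self, pow_zero] at this
      linarith [this]
    have hS2 : ∑ m ∈ Finset.range (n + 2),
        ((n + 2).choose m : ℝ) * (F v) ^ (n + 2 - m) * Iaux F r m v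
          = (∑ m ∈ Finset.range (n + 1),
              ((n + 2).choose m : ℝ) * (F v) ^ (n + 2 - m) * Iaux F r m v)
            + (n + 2) * F v * Iaux F r (n + 1) v := by
      rw [Finset.sum_range_succ]
      congr 1
      have hc : ((n + 2).choose (n + 1) : ℝ) = (n + 2 : ℝ) := by
        rw [Nat.choose_succ_self_right]
        push_cast
        ring
      rw [hc]
      have he : n + 2 - (n + 1) = 1 := by omega
      rw [he, pow_one]
    rw [hS1, hS2]
    have hI : (∫ x in v..r, (1 - F x) ^ (n + 2 - 1)) = Iaux F r (n + 1) v := by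
      rw [Iaux]
      norm_num
    rw [hI]
    push_cast
    ring
  -- eventual form of the quotient
  have hev : ∀ᶠ v in nhdsWithin (0 : ℝ) (Ioi 0),
      PiSPA F (n + 2) r v / (F v) ^ 2
        = -(v * haux n (F v)) + ∑ m ∈ Finset.range (n + 1),
            ((n + 2).choose m : ℝ) * (F v) ^ (n - m) * Iaux F r m v := by
    filter_upwards [Ioo_mem_nhdsGT_of_mem (⟨le_refl (0 : ℝ), one_pos⟩ : (0 : ℝ) ∈ Ico (0 : ℝ) 1)]
      with v hv
    have hq0 : 0 < F v := hFpos v ⟨hv.1, hv.2.le⟩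
    have hq1 : F v < 1 := hFlt1 v ⟨hv.1.le, hv.2⟩
    have h1 : v * (1 - (1 - F v) ^ (n + 2) - (n + 2) * F v)
        = -(v * haux n (F v)) * (F v) ^ 2 := by
      rw [haux_key n (F v)]
      ring
    have h2 : ∀ m ∈ Finset.range (n + 1),
        ((n + 2).choose m : ℝ) * (F v) ^ (n + 2 - m) * Iaux F r m v
          = ((n + 2).choose m : ℝ) * (F v) ^ (n - m) * Iaux F r m v * (F v) ^ 2 := by
      intro m hm
      rw [Finset.mem_range] at hm
      have he : n + 2 - m = (n - m) + 2 := by omega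
      rw [he, pow_add]
      ring
    rw [expand v hq1, h1, Finset.sum_congr rfl h2, ← Finset.sum_mul, ← add_mul,
      mul_div_cancel_right₀ _ (pow_ne_zero 2 hq0.ne')]
  -- limits of the pieces
  have hF0' : Tendsto F (nhdsWithin (0 : ℝ) (Ioi 0)) (nhds 0) := by
    have := hFcont.tendsto 0
    rw [hF0] at this
    exact this.mono_left nhdsWithin_le_nhds
  have hvlim : Tendsto (fun v : ℝ => v) (nhdsWithin (0 : ℝ) (Ioi 0)) (nhds 0) :=
    (continuous_id.tendsto 0).mono_left nhdsWithin_le_nhds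
  have hlim : Tendsto
      (fun v => -(v * haux n (F v)) + ∑ m ∈ Finset.range (n + 1),
          ((n + 2).choose m : ℝ) * (F v) ^ (n - m) * Iaux F r m v)
      (nhdsWithin (0 : ℝ) (Ioi 0))
      (nhds (-(0 * haux n 0) + ∑ m ∈ Finset.range (n + 1),
          ((n + 2).choose m : ℝ) * (0 : ℝ) ^ (n - m) * Iaux F r m 0)) := by
    apply Tendsto.add
    · exact (hvlim.mul ((haux_continuous n).tendsto 0 |>.comp hF0')).neg
    · apply tendsto_finset_sum
      intro m _
      exact (tendsto_const_nhds.mul (hF0'.pow (n - m))).mul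
        (((Iaux_continuous F hFcont r m).tendsto 0).comp hvlim)
  have hval : -(0 * haux n 0) + ∑ m ∈ Finset.range (n + 1),
        ((n + 2).choose m : ℝ) * (0 : ℝ) ^ (n - m) * Iaux F r m 0
      = ((n + 2).choose 2 : ℝ) * ∫ x in (0 : ℝ)..r, (1 - F x) ^ (n + 2 - 2) := by
    rw [neg_mul_eq_neg_mul]
    rw [Finset.sum_eq_single n]
    · have hc : (n + 2).choose n = (n + 2).choose 2 := by
        have h := Nat.choose_symm (show 2 ≤ n + 2 by omega)
        simpa using h
      simp [hc, Iaux]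
    · intro b hb hbn
      rw [Finset.mem_range] at hb
      have : n - b ≠ 0 := by omega
      simp [zero_pow this]
    · intro hn
      exact absurd (Finset.self_mem_range_succ n) hn
  rw [← hval]
  exact Tendsto.congr' (EventuallyEq.symm hev) hlim
end

section
/- For N = 2 sellers, the speculator's expected profit in the second-price auction decomposes, for every v* ∈ [0,r], as Π*(v*) = [F(v*)² r − ∫₀^{v*} 2 x F(x) f(x) dx] − 2 ∫₀^{v*} F(x)² dx − ∫₀^{v*} 2 x F(x) f(x) dx, where the first bracket is the gain from supply withholding, the second term is the loss from overcompensating the sellers, and the third term is the loss from destroying private values. -/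
open MeasureTheory Set

/-! For two sellers the profit collapses algebraically to `F(v)² r - 2 v F(v)²`: the payment
`2 F(v)(1 - F(v)) y(1, v)` to a single remaining seller cancels against the `∫ (1 - F)` part of
`2 F(v) p*(v)`. The decomposition is then the fundamental theorem of calculus for
`x ↦ x F(x)²`, whose derivative is `F² + 2 x F f`. -/

section TwoSellers

variable {F : ℝ → ℝ} {r v : ℝ}

theorem y_zero : y F r 0 v = r := by
  simp [y]

theorem pstar_two : pstar F 2 r v = v + ∫ x in v..r, (1 - F x) := by
  simp [pstar]

/-- When `F v = 1` the division in `y` is by zero, so the identity then needs `v = r`. -/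
theorem one_sub_mul_y_one (h : F v ≠ 1 ∨ v = r) :
    (1 - F v) * y F r 1 v = (1 - F v) * v + ∫ x in v..r, (1 - F x) := by
  rcases h with hFv | rfl
  · have hne : 1 - F v ≠ 0 := sub_ne_zero.mpr hFv.symm
    simp only [y, pow_one, intervalIntegral.integral_div]
    field_simp
  · simp [y]

theorem PiSPA_two (h : F v ≠ 1 ∨ v = r) :
    PiSPA F 2 r v = F v ^ 2 * r - 2 * (v * F v ^ 2) := by
  simp only [PiSPA, Finset.sum_range_succ, Finset.sum_range_zero, pstar_two, y_zero,
    Nat.choose_zero_right, Nat.choose_one_right, Nat.cast_one, Nat.cast_ofNat, Nat.sub_zero,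
    Nat.add_one_sub_one]
  linear_combination 2 * F v * one_sub_mul_y_one h

end TwoSellers

theorem integral_sq_add_integral_two_mul_mul_deriv {F f : ℝ → ℝ} {a b : ℝ}
    (hderiv : ∀ x ∈ uIcc a b, HasDerivAt F (f x) x) (hfc : ContinuousOn f (uIcc a b)) :
    (∫ x in a..b, F x ^ 2) + (∫ x in a..b, 2 * x * F x * f x) = b * F b ^ 2 - a * F a ^ 2 := by
  have hFc : ContinuousOn F (uIcc a b) := fun x hx =>
    (hderiv x hx).continuousAt.continuousWithinAt
  have hI₁ : IntervalIntegrable (fun x => F x ^ 2) volume a b :=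
    (hFc.pow 2).intervalIntegrable
  have hI₂ : IntervalIntegrable (fun x => 2 * x * F x * f x) volume a b :=
    (((continuousOn_const.mul continuousOn_id).mul hFc).mul hfc).intervalIntegrable
  rw [← intervalIntegral.integral_add hI₁ hI₂]
  refine intervalIntegral.integral_eq_sub_of_hasDerivAt (f := fun x => x * F x ^ 2)
    (fun x hx => ?_) (hI₁.add hI₂)
  refine ((hasDerivAt_id' x).fun_mul ((hderiv x hx).fun_pow 2)).congr_deriv ?_
  push_cast
  ring

theorem PiSPA_two_seller_decomposition_general
    (F f : ℝ → ℝ)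
    (hderiv : ∀ x ∈ Icc (0 : ℝ) 1, HasDerivAt F (f x) x)
    (hfc : ContinuousOn f (Icc 0 1))
    (hFlt1 : ∀ v ∈ Ico (0 : ℝ) 1, F v < 1)
    (r : ℝ) (hr : r ∈ Ioc (0 : ℝ) 1) :
    ∀ v ∈ Icc (0 : ℝ) r,
      PiSPA F 2 r v =
        ((F v) ^ 2 * r - ∫ x in (0 : ℝ)..v, 2 * x * F x * f x)
          - 2 * (∫ x in (0 : ℝ)..v, (F x) ^ 2)
          - ∫ x in (0 : ℝ)..v, 2 * x * F x * f x := by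
  intro v hv
  have hsub : uIcc 0 v ⊆ Icc (0 : ℝ) 1 := by
    rw [uIcc_of_le hv.1]
    exact Icc_subset_Icc le_rfl (hv.2.trans hr.2)
  have hFv : F v ≠ 1 ∨ v = r := by
    rcases (hv.2.trans hr.2).lt_or_eq with hv1 | rfl
    · exact Or.inl (hFlt1 v ⟨hv.1, hv1⟩).ne
    · exact Or.inr (le_antisymm hr.2 hv.2).symm
  have hFTC := integral_sq_add_integral_two_mul_mul_deriv
    (fun x hx => hderiv x (hsub hx)) (hfc.mono hsub)
  rw [PiSPA_two hFv]
  linear_combination 2 * hFTC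

/-- For `N = 2`, the speculator's second-price profit decomposes into the gain from
supply withholding, the loss from overcompensating the sellers, and the loss from
destroying private values. -/
theorem PiSPA_two_seller_decomposition
    (F f : ℝ → ℝ)
    (hderiv : ∀ x ∈ Icc (0 : ℝ) 1, HasDerivAt F (f x) x)
    (hfc : ContinuousOn f (Icc 0 1))
    (hFmono : Monotone F)
    (hF0 : F 0 = 0) (hFpos : ∀ v ∈ Ioc (0 : ℝ) 1, 0 < F v)
    (hFlt1 : ∀ v ∈ Ico (0 : ℝ) 1, F v < 1) (hF1 : F 1 = 1)
    (r : ℝ) (hr : r ∈ Ioc (0 : ℝ) 1) :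
    ∀ v ∈ Icc (0 : ℝ) r,
      PiSPA F 2 r v =
        ((F v) ^ 2 * r - ∫ x in (0 : ℝ)..v, 2 * x * F x * f x)
          - 2 * (∫ x in (0 : ℝ)..v, (F x) ^ 2)
          - ∫ x in (0 : ℝ)..v, 2 * x * F x * f x :=
  PiSPA_two_seller_decomposition_general F f hderiv hfc hFlt1 r hr
end

section
/- The first-price acquisition price map p⋆(v) is strictly increasing on [0,r], with p⋆(0) = π₀ and p⋆(r) = r. Consequently, for every p ∈ (π₀, r] there is a unique cutoff v⋆ ∈ (0,r] with p⋆(v⋆) = p. -/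
/-!
With `n = N - 1`, `q = F v` and any fixed `w`, the binomial identity
`∑_{m<n} C(n,m) (1-q)^m q^(n-m) = 1 - (1-q)^n` rewrites the price as
`p⋆(v) = w - (w - v)(1-q)^n + ∫_v^r (1-F)^n + ∑_m C(n,m) (1-q)^m q^(n-m) (ū(m+1,v) - w)`.
For `v₁ < v₂` take `w = v₂`. The integral over `[v₁, v₂]` is strictly below `(v₂ - v₁)(1 - F v₁)^n`
because `(1 - F)^n` is strictly decreasing, and every summand is larger at `v₂` than at `v₁`:
if the maximiser `b` of `ū(m+1, v₁)` lies below `v₂`, the summand at `v₁` is `≤ 0`, while the one at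
`v₂` is `≥ 0` as `ū ≥ v`; otherwise `b` is admissible for `v₂`, and
`(1 - F v)^(m+1) ū(m+1, v) ≥ b (1 - F b)^(m+1)` transfers the bound from `v₁` to `v₂`.
For continuity, `ū(m, v) = max_{[v,r]} b (1 - F b)^m / (1 - F v)^m` when `v < r`, and
`v ≤ p⋆(v) ≤ r = p⋆(r)` squeezes `p⋆` at `r`; the cutoff then comes from the intermediate value
theorem.
-/

open MeasureTheory Set

/-- Truncated conditional CDF `G(x; v) = (F x − F v)/(1 − F v)`. -/
noncomputable def G (F : ℝ → ℝ) (v x : ℝ) : ℝ := (F x - F v) / (1 - F v)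

/-- `ubar_b(m, v) = max_{b ∈ [v, r]} b (1 − G(b; v))^m`. -/
noncomputable def ubarb (F : ℝ → ℝ) (r : ℝ) (m : ℕ) (v : ℝ) : ℝ :=
  sSup ((fun b => b * (1 - G F v b) ^ m) '' Icc v r)

/-- `π₀ = ∫_0^r (1−F x)^(N−1) dx`. -/
noncomputable def pi0 (F : ℝ → ℝ) (N : ℕ) (r : ℝ) : ℝ :=
  ∫ x in (0 : ℝ)..r, (1 - F x) ^ (N - 1)

/-- First-price acquisition price `p⋆(v)`. -/
noncomputable def pFPA (F : ℝ → ℝ) (N : ℕ) (r : ℝ) (v : ℝ) : ℝ :=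
  v + (∫ x in v..r, (1 - F x) ^ (N - 1)) +
    ∑ m ∈ Finset.range (N - 1),
      ((N - 1).choose m : ℝ) * (1 - F v) ^ m * (F v) ^ (N - 1 - m) *
        (ubarb F r (m + 1) v - v)

theorem ContinuousOn.continuousOn_sSup_image_Icc_left {α β : Type*}
    [ConditionallyCompleteLinearOrder α] [TopologicalSpace α] [OrderTopology α]
    [ConditionallyCompleteLinearOrder β] [TopologicalSpace β] [OrderTopology β]
    {g : α → β} {a r : α} (hg : ContinuousOn g (Icc a r)) :
    ContinuousOn (fun v => sSup (g '' Icc v r)) (Icc a r) := by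
  rcases lt_or_ge r a with hra | har
  · simp [Icc_eq_empty_of_lt hra]
  set g' := IccExtend har ((Icc a r).domRestrict g)
  have hg' : Continuous g' := (continuousOn_iff_continuous_domRestrict.1 hg).Icc_extend'
  -- `max v '' [a, r] = [v, r]` moves the supremum to the fixed compact set `[a, r]`
  have hsup : ∀ v ∈ Icc a r, sSup (g '' Icc v r) = sSup ((fun b => g' (max v b)) '' Icc a r) := by
    intro v hv
    have himg : (fun b => max v b) '' Icc a r = Icc v r := by
      ext b
      constructor
      · rintro ⟨c, hc, rfl⟩
        exact ⟨le_max_left _ _, max_le hv.2 hc.2⟩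
      · intro hb
        exact ⟨b, ⟨hv.1.trans hb.1, hb.2⟩, max_eq_right hb.1⟩
    rw [← image_image g' (fun b => max v b), himg]
    congr 1
    exact image_congr fun b hb =>
      (IccExtend_of_mem har ((Icc a r).domRestrict g) ⟨hv.1.trans hb.1, hb.2⟩).symm
  exact (isCompact_Icc.continuous_sSup (hg'.comp continuous_max)).continuousOn.congr hsup

theorem sum_range_choose_mul_one_sub_pow_mul_pow (n : ℕ) (q : ℝ) :
    ∑ m ∈ Finset.range n, (n.choose m : ℝ) * (1 - q) ^ m * q ^ (n - m) = 1 - (1 - q) ^ n := by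
  have h := add_pow (1 - q) q n
  rw [sub_add_cancel, one_pow, Finset.sum_range_succ, Nat.sub_self, pow_zero, mul_one,
    Nat.choose_self, Nat.cast_one, mul_one] at h
  have hcomm : ∑ m ∈ Finset.range n, (n.choose m : ℝ) * (1 - q) ^ m * q ^ (n - m)
      = ∑ m ∈ Finset.range n, (1 - q) ^ m * q ^ (n - m) * n.choose m :=
    Finset.sum_congr rfl fun m _ => by ring
  linarith

theorem intervalIntegral.integral_lt_mul_of_strictAntiOn {g : ℝ → ℝ} {a b : ℝ} (hab : a < b)
    (hgc : ContinuousOn g (Icc a b)) (hg : StrictAntiOn g (Icc a b)) :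
    ∫ x in a..b, g x < (b - a) * g a := by
  have h := integral_lt_integral_of_continuousOn_of_le_of_exists_lt hab hgc continuousOn_const
    (fun x hx => hg.antitoneOn (left_mem_Icc.2 hab.le) (Ioc_subset_Icc_self hx) hx.1.le)
    ⟨b, right_mem_Icc.2 hab.le, hg (left_mem_Icc.2 hab.le) (right_mem_Icc.2 hab.le) hab⟩
  rwa [intervalIntegral.integral_const, smul_eq_mul] at h

theorem StrictMonoOn.existsUnique_mem_Ioc_eq {α δ : Type*}
    [ConditionallyCompleteLinearOrder α] [TopologicalSpace α] [OrderTopology α] [DenselyOrdered α]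
    [LinearOrder δ] [TopologicalSpace δ] [OrderClosedTopology δ]
    {h : α → δ} {a b : α} (hab : a ≤ b) (hmono : StrictMonoOn h (Icc a b))
    (hcont : ContinuousOn h (Icc a b)) :
    ∀ p ∈ Ioc (h a) (h b), ∃! v, v ∈ Ioc a b ∧ h v = p := by
  intro p hp
  obtain ⟨v, hv, rfl⟩ := intermediate_value_Icc hab hcont (Ioc_subset_Icc_self hp)
  have hav : a ≠ v := by rintro rfl; exact hp.1.ne rfl
  refine ⟨v, ⟨⟨lt_of_le_of_ne hv.1 hav, hv.2⟩, rfl⟩, ?_⟩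
  rintro w ⟨hw, hwv⟩
  exact hmono.injOn (Ioc_subset_Icc_self hw) hv hwv

structure IsStrictCDF (F : ℝ → ℝ) : Prop where
  continuousOn : ContinuousOn F (Icc 0 1)
  strictMonoOn : StrictMonoOn F (Icc 0 1)
  map_zero : F 0 = 0
  map_one : F 1 = 1

namespace IsStrictCDF

variable {F : ℝ → ℝ}

theorem of_hasDerivAt {f : ℝ → ℝ} (hderiv : ∀ x ∈ Icc (0 : ℝ) 1, HasDerivAt F (f x) x)
    (hfpos : ∀ x ∈ Ioo (0 : ℝ) 1, 0 < f x) (hF0 : F 0 = 0) (hF1 : F 1 = 1) :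
    IsStrictCDF F := by
  have hFc : ContinuousOn F (Icc 0 1) := fun x hx =>
    (hderiv x hx).continuousAt.continuousWithinAt
  refine ⟨hFc, strictMonoOn_of_deriv_pos (convex_Icc 0 1) hFc fun x hx => ?_, hF0, hF1⟩
  rw [interior_Icc] at hx
  rw [(hderiv x (Ioo_subset_Icc_self hx)).deriv]
  exact hfpos x hx

theorem nonneg (hF : IsStrictCDF F) {x : ℝ} (hx : x ∈ Icc (0 : ℝ) 1) : 0 ≤ F x :=
  hF.map_zero ▸ hF.strictMonoOn.monotoneOn (left_mem_Icc.2 zero_le_one) hx hx.1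

theorem le_one (hF : IsStrictCDF F) {x : ℝ} (hx : x ∈ Icc (0 : ℝ) 1) : F x ≤ 1 :=
  hF.map_one ▸ hF.strictMonoOn.monotoneOn hx (right_mem_Icc.2 zero_le_one) hx.2

theorem lt_one (hF : IsStrictCDF F) {x : ℝ} (hx : x ∈ Ico (0 : ℝ) 1) : F x < 1 :=
  hF.map_one ▸ hF.strictMonoOn (Ico_subset_Icc_self hx) (right_mem_Icc.2 zero_le_one) hx.2

theorem continuousOn_one_sub_pow (hF : IsStrictCDF F) (n : ℕ) :
    ContinuousOn (fun x => (1 - F x) ^ n) (Icc 0 1) :=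
  (continuousOn_const.sub hF.continuousOn).pow n

theorem strictAntiOn_one_sub_pow (hF : IsStrictCDF F) {n : ℕ} (hn : n ≠ 0) :
    StrictAntiOn (fun x => (1 - F x) ^ n) (Icc 0 1) := fun x hx y hy hxy =>
  pow_lt_pow_left₀ (by linarith [hF.le_one hy, hF.strictMonoOn hx hy hxy])
    (sub_nonneg.2 (hF.le_one hy)) hn

end IsStrictCDF

theorem one_sub_mul_one_sub_G {F : ℝ → ℝ} {v : ℝ} (hv : F v ≠ 1) (b : ℝ) :
    (1 - F v) * (1 - G F v b) = 1 - F b := by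
  have : 1 - F v ≠ 0 := sub_ne_zero.2 hv.symm
  rw [G]; field_simp; ring

theorem isGreatest_ubarb {F : ℝ → ℝ} {r v : ℝ} (m : ℕ) (hFc : ContinuousOn F (Icc v r))
    (hvr : v ≤ r) :
    IsGreatest ((fun b => b * (1 - G F v b) ^ m) '' Icc v r) (ubarb F r m v) := by
  have hc : ContinuousOn (fun b => b * (1 - G F v b) ^ m) (Icc v r) :=
    continuousOn_id.mul ((continuousOn_const.sub ((hFc.sub continuousOn_const).div_const _)).pow m)
  obtain ⟨b, hb, hsup, hle⟩ := isCompact_Icc.exists_sSup_image_eq_and_ge (nonempty_Icc.2 hvr) hc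
  rw [ubarb, hsup]
  exact ⟨mem_image_of_mem _ hb, forall_mem_image.2 hle⟩

theorem le_ubarb {F : ℝ → ℝ} {r v : ℝ} (m : ℕ) (hFc : ContinuousOn F (Icc v r)) (hvr : v ≤ r) :
    v ≤ ubarb F r m v := by
  have h := (isGreatest_ubarb m hFc hvr).2 (mem_image_of_mem _ (left_mem_Icc.2 hvr))
  rwa [G, sub_self, zero_div, sub_zero, one_pow, mul_one] at h

theorem ubarb_self (F : ℝ → ℝ) (r : ℝ) (m : ℕ) : ubarb F r m r = r := by
  rw [ubarb, Icc_self, image_singleton, csSup_singleton, G, sub_self, zero_div, sub_zero,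
    one_pow, mul_one]

theorem ubarb_eq_div {F : ℝ → ℝ} (r : ℝ) (m : ℕ) {v : ℝ} (hv : F v < 1) :
    ubarb F r m v = sSup ((fun b => b * (1 - F b) ^ m) '' Icc v r) / (1 - F v) ^ m := by
  have hpos : 0 < (1 - F v) ^ m := pow_pos (sub_pos.2 hv) m
  have hfun : (fun b => b * (1 - G F v b) ^ m)
      = (fun y => ((1 - F v) ^ m)⁻¹ • y) ∘ fun b => b * (1 - F b) ^ m := by
    funext b
    rw [Function.comp_apply, smul_eq_mul, ← one_sub_mul_one_sub_G hv.ne b, mul_pow]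
    field_simp
  rw [ubarb, hfun, image_comp, image_smul, Real.sSup_smul_of_nonneg (inv_nonneg.2 hpos.le),
    smul_eq_mul, inv_mul_eq_div]

theorem IsStrictCDF.continuousOn_ubarb {F : ℝ → ℝ} (hF : IsStrictCDF F) {r : ℝ} (hr : r ≤ 1)
    (m : ℕ) : ContinuousOn (ubarb F r m) (Ico 0 r) := by
  have hlt : ∀ v ∈ Ico 0 r, F v < 1 := fun v hv => hF.lt_one ⟨hv.1, hv.2.trans_le hr⟩
  have hsup : ContinuousOn (fun v => sSup ((fun b => b * (1 - F b) ^ m) '' Icc v r)) (Icc 0 r) :=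
    (continuousOn_id.mul ((hF.continuousOn_one_sub_pow m).mono (Icc_subset_Icc_right hr)))
      |>.continuousOn_sSup_image_Icc_left
  refine ContinuousOn.congr ?_ fun v hv => ubarb_eq_div r m (hlt v hv)
  exact (hsup.mono Ico_subset_Icc_self).div
    (((continuousOn_const.sub hF.continuousOn).pow m).mono fun v hv => ⟨hv.1, hv.2.le.trans hr⟩)
    fun v hv => (pow_pos (sub_pos.2 (hlt v hv)) m).ne'

theorem IsStrictCDF.ubarb_le_or_one_sub_pow_mul_ubarb_le {F : ℝ → ℝ} (hF : IsStrictCDF F)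
    (m : ℕ) {r v₁ v₂ : ℝ} (h₀ : 0 ≤ v₁) (h₁₂ : v₁ < v₂) (h₂ : v₂ ≤ r) (hr : r ≤ 1) :
    ubarb F r (m + 1) v₁ ≤ v₂ ∨
      (1 - F v₁) ^ m * ubarb F r (m + 1) v₁ ≤ (1 - F v₂) ^ m * ubarb F r (m + 1) v₂ := by
  have hv₁ : v₁ ∈ Icc (0 : ℝ) 1 := ⟨h₀, by linarith⟩
  have hv₂ : v₂ ∈ Icc (0 : ℝ) 1 := ⟨by linarith, by linarith⟩
  have hFc : ∀ v ∈ Icc (0 : ℝ) 1, ContinuousOn F (Icc v r) := fun v hv =>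
    hF.continuousOn.mono (Icc_subset_Icc hv.1 hr)
  have hq₁ : F v₁ < 1 := hF.lt_one ⟨h₀, by linarith⟩
  obtain ⟨⟨b, hb, hub⟩, -⟩ := isGreatest_ubarb (m + 1) (hFc v₁ hv₁) (h₁₂.le.trans h₂)
  dsimp only at hub
  have hb₁ : b ∈ Icc (0 : ℝ) 1 := ⟨h₀.trans hb.1, hb.2.trans hr⟩
  have hFb : (1 - F v₁) * (1 - G F v₁ b) = 1 - F b := one_sub_mul_one_sub_G hq₁.ne b
  rcases le_or_gt b v₂ with hbv₂ | hv₂b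
  · left
    have hG : 0 ≤ 1 - G F v₁ b ∧ 1 - G F v₁ b ≤ 1 := by
      constructor <;> nlinarith [hF.le_one hb₁, hF.strictMonoOn.monotoneOn hv₁ hb₁ hb.1]
    rw [← hub]
    exact (mul_le_of_le_one_right (h₀.trans hb.1) (pow_le_one₀ hG.1 hG.2)).trans hbv₂
  · right
    have hq₂ : F v₂ < 1 := hF.lt_one ⟨hv₂.1, hv₂b.trans_le (hb.2.trans hr)⟩
    have hb₂ := (isGreatest_ubarb (m + 1) (hFc v₂ hv₂) h₂).2
      (mem_image_of_mem _ ⟨hv₂b.le, hb.2⟩)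
    have hFb₂ : (1 - F v₂) * (1 - G F v₂ b) = 1 - F b := one_sub_mul_one_sub_G hq₂.ne b
    have hu₂ : 0 ≤ ubarb F r (m + 1) v₂ := hv₂.1.trans (le_ubarb _ (hFc v₂ hv₂) h₂)
    refine le_of_mul_le_mul_left ?_ (sub_pos.2 hq₁)
    calc (1 - F v₁) * ((1 - F v₁) ^ m * ubarb F r (m + 1) v₁) = b * (1 - F b) ^ (m + 1) := by
          rw [← hub, ← hFb, mul_pow]; ring
      _ = (1 - F v₂) * ((1 - F v₂) ^ m * (b * (1 - G F v₂ b) ^ (m + 1))) := by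
          rw [← hFb₂, mul_pow]; ring
      _ ≤ (1 - F v₂) * ((1 - F v₂) ^ m * ubarb F r (m + 1) v₂) := by gcongr
      _ ≤ (1 - F v₁) * ((1 - F v₂) ^ m * ubarb F r (m + 1) v₂) := by
          gcongr
          exact hF.strictMonoOn.monotoneOn hv₁ hv₂ h₁₂.le

theorem IsStrictCDF.one_sub_pow_mul_pow_mul_ubarb_sub_le {F : ℝ → ℝ} (hF : IsStrictCDF F)
    (m k : ℕ) {r v₁ v₂ : ℝ} (h₀ : 0 ≤ v₁) (h₁₂ : v₁ < v₂) (h₂ : v₂ ≤ r) (hr : r ≤ 1) :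
    (1 - F v₁) ^ m * F v₁ ^ k * (ubarb F r (m + 1) v₁ - v₂)
      ≤ (1 - F v₂) ^ m * F v₂ ^ k * (ubarb F r (m + 1) v₂ - v₂) := by
  have hv₁ : v₁ ∈ Icc (0 : ℝ) 1 := ⟨h₀, by linarith⟩
  have hv₂ : v₂ ∈ Icc (0 : ℝ) 1 := ⟨by linarith, by linarith⟩
  have hq₁₂ : F v₁ ≤ F v₂ := hF.strictMonoOn.monotoneOn hv₁ hv₂ h₁₂.le
  have hq₂ : F v₂ ≤ 1 := hF.le_one hv₂
  set D := (1 - F v₂) ^ m * (ubarb F r (m + 1) v₂ - v₂)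
  have hD : 0 ≤ D := mul_nonneg (pow_nonneg (sub_nonneg.2 hq₂) m)
    (sub_nonneg.2 (le_ubarb _ (hF.continuousOn.mono (Icc_subset_Icc hv₂.1 hr)) h₂))
  have h : (1 - F v₁) ^ m * (ubarb F r (m + 1) v₁ - v₂) ≤ D := by
    rcases hF.ubarb_le_or_one_sub_pow_mul_ubarb_le m h₀ h₁₂ h₂ hr with hu | hu
    · exact (mul_nonpos_of_nonneg_of_nonpos (pow_nonneg (by linarith) m) (by linarith)).trans hD
    · have hpow : (1 - F v₂) ^ m * v₂ ≤ (1 - F v₁) ^ m * v₂ :=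
        mul_le_mul_of_nonneg_right (pow_le_pow_left₀ (by linarith) (by linarith) m) hv₂.1
      linarith
  calc (1 - F v₁) ^ m * F v₁ ^ k * (ubarb F r (m + 1) v₁ - v₂)
      = F v₁ ^ k * ((1 - F v₁) ^ m * (ubarb F r (m + 1) v₁ - v₂)) := by ring
    _ ≤ F v₁ ^ k * D := mul_le_mul_of_nonneg_left h (pow_nonneg (hF.nonneg hv₁) k)
    _ ≤ F v₂ ^ k * D := mul_le_mul_of_nonneg_right (pow_le_pow_left₀ (hF.nonneg hv₁) hq₁₂ k) hD
    _ = _ := by ring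

theorem pFPA_eq_sub_add (F : ℝ → ℝ) (N : ℕ) (r v w : ℝ) :
    pFPA F N r v = w - (w - v) * (1 - F v) ^ (N - 1) + (∫ x in v..r, (1 - F x) ^ (N - 1)) +
      ∑ m ∈ Finset.range (N - 1),
        ((N - 1).choose m : ℝ) * (1 - F v) ^ m * (F v) ^ (N - 1 - m) *
          (ubarb F r (m + 1) v - w) := by
  have hsplit : ∀ m ∈ Finset.range (N - 1),
      ((N - 1).choose m : ℝ) * (1 - F v) ^ m * (F v) ^ (N - 1 - m) * (ubarb F r (m + 1) v - v)
        = ((N - 1).choose m : ℝ) * (1 - F v) ^ m * (F v) ^ (N - 1 - m) * (ubarb F r (m + 1) v - w)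
          + ((N - 1).choose m : ℝ) * (1 - F v) ^ m * (F v) ^ (N - 1 - m) * (w - v) :=
    fun m _ => by ring
  rw [pFPA, Finset.sum_congr rfl hsplit, Finset.sum_add_distrib, ← Finset.sum_mul,
    sum_range_choose_mul_one_sub_pow_mul_pow]
  ring

theorem pFPA_self (F : ℝ → ℝ) (N : ℕ) (r : ℝ) : pFPA F N r r = r := by
  simp [pFPA_eq_sub_add F N r r r, ubarb_self]

theorem pFPA_zero {F : ℝ → ℝ} (hF0 : F 0 = 0) (N : ℕ) (r : ℝ) : pFPA F N r 0 = pi0 F N r := by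
  rw [pFPA, pi0, Finset.sum_eq_zero fun m hm => ?_, zero_add, add_zero]
  rw [hF0, zero_pow (by have := Finset.mem_range.1 hm; omega), mul_zero, zero_mul]

theorem IsStrictCDF.le_pFPA {F : ℝ → ℝ} (hF : IsStrictCDF F) (N : ℕ) {r v : ℝ}
    (hv : v ∈ Icc 0 r) (hr : r ≤ 1) : v ≤ pFPA F N r v := by
  have hsub : Icc v r ⊆ Icc 0 1 := Icc_subset_Icc hv.1 hr
  have hv₁ : v ∈ Icc (0 : ℝ) 1 := hsub (left_mem_Icc.2 hv.2)
  have hint : 0 ≤ ∫ x in v..r, (1 - F x) ^ (N - 1) :=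
    intervalIntegral.integral_nonneg hv.2 fun x hx =>
      pow_nonneg (sub_nonneg.2 (hF.le_one (hsub hx))) _
  have hsum : 0 ≤ ∑ m ∈ Finset.range (N - 1),
      ((N - 1).choose m : ℝ) * (1 - F v) ^ m * (F v) ^ (N - 1 - m) * (ubarb F r (m + 1) v - v) :=
    Finset.sum_nonneg fun m _ => mul_nonneg (mul_nonneg (mul_nonneg (Nat.cast_nonneg _)
      (pow_nonneg (sub_nonneg.2 (hF.le_one hv₁)) _)) (pow_nonneg (hF.nonneg hv₁) _))
      (sub_nonneg.2 (le_ubarb _ (hF.continuousOn.mono hsub) hv.2))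
  rw [pFPA]
  linarith

theorem IsStrictCDF.strictMonoOn_pFPA {F : ℝ → ℝ} (hF : IsStrictCDF F) {N : ℕ} (hN : 2 ≤ N)
    {r : ℝ} (hr : r ≤ 1) : StrictMonoOn (pFPA F N r) (Icc 0 r) := by
  intro v₁ h₁ v₂ h₂ h₁₂
  have hsub : Icc (0 : ℝ) r ⊆ Icc 0 1 := Icc_subset_Icc_right hr
  have hint : ∀ a ∈ Icc (0 : ℝ) r, ∀ b ∈ Icc (0 : ℝ) r,
      IntervalIntegrable (fun x => (1 - F x) ^ (N - 1)) volume a b := fun a ha b hb =>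
    ((hF.continuousOn_one_sub_pow _).mono (uIcc_subset_Icc (hsub ha) (hsub hb))).intervalIntegrable
  have hsplit := intervalIntegral.integral_add_adjacent_intervals
    (hint v₁ h₁ v₂ h₂) (hint v₂ h₂ r (right_mem_Icc.2 (h₁.1.trans h₁.2)))
  have hlt : ∫ x in v₁..v₂, (1 - F x) ^ (N - 1) < (v₂ - v₁) * (1 - F v₁) ^ (N - 1) :=
    intervalIntegral.integral_lt_mul_of_strictAntiOn h₁₂
      ((hF.continuousOn_one_sub_pow _).mono (Icc_subset_Icc h₁.1 (h₂.2.trans hr)))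
      ((hF.strictAntiOn_one_sub_pow (by omega)).mono (Icc_subset_Icc h₁.1 (h₂.2.trans hr)))
  have hsum : ∑ m ∈ Finset.range (N - 1),
        ((N - 1).choose m : ℝ) * (1 - F v₁) ^ m * (F v₁) ^ (N - 1 - m) *
          (ubarb F r (m + 1) v₁ - v₂)
      ≤ ∑ m ∈ Finset.range (N - 1),
        ((N - 1).choose m : ℝ) * (1 - F v₂) ^ m * (F v₂) ^ (N - 1 - m) *
          (ubarb F r (m + 1) v₂ - v₂) :=
    Finset.sum_le_sum fun m _ => by
      simpa only [mul_assoc] using mul_le_mul_of_nonneg_left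
        (hF.one_sub_pow_mul_pow_mul_ubarb_sub_le m (N - 1 - m) h₁.1 h₁₂ h₂.2 hr)
        (Nat.cast_nonneg ((N - 1).choose m))
  rw [pFPA_eq_sub_add F N r v₁ v₂, pFPA_eq_sub_add F N r v₂ v₂, ← hsplit]
  linarith

theorem IsStrictCDF.continuousOn_pFPA_Ico {F : ℝ → ℝ} (hF : IsStrictCDF F) (N : ℕ) {r : ℝ}
    (hr₀ : 0 ≤ r) (hr : r ≤ 1) : ContinuousOn (pFPA F N r) (Ico 0 r) := by
  have hFc : ContinuousOn F (Ico 0 r) :=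
    hF.continuousOn.mono (Ico_subset_Icc_self.trans (Icc_subset_Icc_right hr))
  have hint : ContinuousOn (fun v => ∫ x in v..r, (1 - F x) ^ (N - 1)) (Ico 0 r) := by
    refine (intervalIntegral.continuousOn_primitive_interval_left (a := 0) ?_).mono ?_
    · rw [uIcc_of_le hr₀]
      exact ((hF.continuousOn_one_sub_pow _).mono (Icc_subset_Icc_right hr)).integrableOn_Icc
    · exact Ico_subset_Icc_self.trans Icc_subset_uIcc
  refine (continuousOn_id.add hint).add (continuousOn_finsetSum _ fun m _ => ?_)
  exact (((continuousOn_const.mul ((continuousOn_const.sub hFc).pow _)).mul (hFc.pow _)).mul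
    ((hF.continuousOn_ubarb hr _).sub continuousOn_id))

theorem IsStrictCDF.continuousOn_pFPA {F : ℝ → ℝ} (hF : IsStrictCDF F) {N : ℕ} (hN : 2 ≤ N)
    {r : ℝ} (hr₀ : 0 ≤ r) (hr : r ≤ 1) : ContinuousOn (pFPA F N r) (Icc 0 r) := by
  intro v hv
  rcases hv.2.lt_or_eq with hvr | rfl
  · have hIco : Icc 0 r ∩ Iio r ⊆ Ico 0 r := fun x hx => ⟨hx.1.1, hx.2⟩
    exact ((hF.continuousOn_pFPA_Ico N hr₀ hr).mono hIco v ⟨hv, hvr⟩).mono_of_mem_nhdsWithin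
      (inter_mem_nhdsWithin _ (Iio_mem_nhds hvr))
  · have hle : ∀ x ∈ Icc 0 v, pFPA F N v x ≤ v := fun x hx => by
      simpa only [pFPA_self] using (hF.strictMonoOn_pFPA hN hr).monotoneOn hx hv hx.2
    rw [ContinuousWithinAt, pFPA_self]
    exact tendsto_of_tendsto_of_tendsto_of_le_of_le'
      (Filter.tendsto_id.mono_left nhdsWithin_le_nhds) tendsto_const_nhds
      (eventually_nhdsWithin_of_forall fun x hx => hF.le_pFPA N hx hr)
      (eventually_nhdsWithin_of_forall hle)

theorem pFPA_strictMono_and_unique_cutoff_general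
    (F f : ℝ → ℝ) (N : ℕ) (hN : 2 ≤ N)
    (hderiv : ∀ x ∈ Icc (0 : ℝ) 1, HasDerivAt F (f x) x)
    (hfpos : ∀ x ∈ Ioo (0 : ℝ) 1, 0 < f x)
    (hF0 : F 0 = 0) (hF1 : F 1 = 1)
    (r : ℝ) (hr : r ∈ Ioc (0 : ℝ) 1) :
    StrictMonoOn (pFPA F N r) (Icc 0 r) ∧
    pFPA F N r 0 = pi0 F N r ∧
    pFPA F N r r = r ∧
    ∀ p ∈ Ioc (pi0 F N r) r, ∃! v, v ∈ Ioc (0 : ℝ) r ∧ pFPA F N r v = p := by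
  have hF := IsStrictCDF.of_hasDerivAt hderiv hfpos hF0 hF1
  have hmono := hF.strictMonoOn_pFPA hN hr.2
  have hcont := hF.continuousOn_pFPA hN hr.1.le hr.2
  refine ⟨hmono, pFPA_zero hF0 N r, pFPA_self F N r, ?_⟩
  simpa only [pFPA_zero hF0, pFPA_self] using hmono.existsUnique_mem_Ioc_eq hr.1.le hcont

theorem pFPA_strictMono_and_unique_cutoff
    (F f : ℝ → ℝ) (N : ℕ) (hN : 2 ≤ N)
    (hderiv : ∀ x ∈ Icc (0 : ℝ) 1, HasDerivAt F (f x) x)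
    (hfc : ContinuousOn f (Icc 0 1))
    (hfpos : ∀ x ∈ Ioo (0 : ℝ) 1, 0 < f x)
    (hF0 : F 0 = 0) (hF1 : F 1 = 1)
    (r : ℝ) (hr : r ∈ Ioc (0 : ℝ) 1) :
    StrictMonoOn (pFPA F N r) (Icc 0 r) ∧
    pFPA F N r 0 = pi0 F N r ∧
    pFPA F N r r = r ∧
    ∀ p ∈ Ioc (pi0 F N r) r, ∃! v, v ∈ Ioc (0 : ℝ) r ∧ pFPA F N r v = p :=
  pFPA_strictMono_and_unique_cutoff_general F f N hN hderiv hfpos hF0 hF1 r hr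
end

section
/- Suppose there exist distinct k, k′ ∈ A such that for every i ∈ I∖A, lim_{v→0⁺} v F_i(v)/F_k(v) = 0 and lim_{v→0⁺} v F_i(v)/F_{k′}(v) = 0, and suppose that for all j, j′ ∈ A the limit lim_{v→0⁺} F_j(v)/F_{j′}(v) exists in [0,+∞]. Then there exists a common cutoff v* ∈ (0,r] such that the speculator's expected profit Π*(v*) is strictly positive; that is, speculation in the second-price procurement auction with limited access to asymmetric sellers is profitable. -/
open MeasureTheory Set Filter

variable {N : ℕ}

section Helpers

lemma sum_split (A : Finset (Fin N)) (g : Finset (Fin N) → ℝ) :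
    ∑ S ∈ A.powerset.filter Finset.Nonempty, g S
      = (∑ j ∈ A, g {j}) + ∑ S ∈ A.powerset.filter (fun S => 2 ≤ S.card), g S := by
  classical
  have h1 : A.powerset.filter Finset.Nonempty =
      (A.powerset.filter (fun S => S.card = 1)) ∪ (A.powerset.filter (fun S => 2 ≤ S.card)) := by
    rw [← Finset.filter_or]
    apply Finset.filter_congr
    intro S _
    simp only [← Finset.card_pos, eq_iff_iff]
    omega
  have hdisj : Disjoint (A.powerset.filter (fun S => S.card = 1))
      (A.powerset.filter (fun S => 2 ≤ S.card)) := by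
    rw [Finset.disjoint_left]
    intro S hS1 hS2
    simp only [Finset.mem_filter] at hS1 hS2
    omega
  rw [h1, Finset.sum_union hdisj]
  congr 1
  rw [← Finset.powersetCard_eq_filter, Finset.powersetCard_one, Finset.sum_map]
  rfl

lemma sum_powerset_split (A : Finset (Fin N)) (g : Finset (Fin N) → ℝ) :
    ∑ S ∈ A.powerset, g S
      = g ∅ + ∑ S ∈ A.powerset.filter Finset.Nonempty, g S := by
  classical
  have h := Finset.sum_filter_add_sum_filter_not A.powerset Finset.Nonempty g
  have h2 : A.powerset.filter (fun S => ¬ S.Nonempty) = {∅} := by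
    ext S
    simp only [Finset.mem_filter, Finset.mem_powerset, Finset.not_nonempty_iff_eq_empty,
      Finset.mem_singleton, and_iff_right_iff_imp]
    rintro rfl
    exact Finset.empty_subset A
  rw [h2] at h
  simp only [Finset.sum_singleton] at h
  linarith

lemma sum_NE_prod (A : Finset (Fin N)) (a : Fin N → ℝ) :
    ∑ S ∈ A.powerset.filter Finset.Nonempty, (∏ j ∈ S, a j) * ∏ j ∈ A \ S, (1 - a j)
      = 1 - ∏ j ∈ A, (1 - a j) := by
  classical
  have h := Finset.prod_add a (fun j => 1 - a j) A
  simp only [add_sub_cancel, Finset.prod_const_one] at h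
  rw [sum_powerset_split A (fun S => (∏ j ∈ S, a j) * ∏ j ∈ A \ S, (1 - a j))] at h
  simp only [Finset.prod_empty, Finset.sdiff_empty, one_mul] at h
  linarith

lemma prod_one_sub_le (A : Finset (Fin N)) (a : Fin N → ℝ) (h0 : ∀ j ∈ A, 0 ≤ a j) :
    ∏ j ∈ A, (1 - a j) ≤ 1 - (∑ j ∈ A, a j)
      + ∑ S ∈ A.powerset.filter (fun S => 2 ≤ S.card), ∏ j ∈ S, a j := by
  classical
  have h : ∏ j ∈ A, (1 - a j) = ∑ S ∈ A.powerset, ∏ j ∈ S, (- a j) := by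
    have h := Finset.prod_add (fun j => - a j) (fun _ => (1:ℝ)) A
    simp only [Finset.prod_const_one, mul_one] at h
    rw [← h]
    apply Finset.prod_congr rfl
    intro j _; ring
  rw [h, sum_powerset_split A (fun S => ∏ j ∈ S, (- a j)),
    sum_split A (fun S => ∏ j ∈ S, (- a j))]
  simp only [Finset.prod_empty, Finset.prod_singleton]
  have h2 : ∑ j ∈ A, (- a j) = - ∑ j ∈ A, a j := by simp
  rw [h2]
  have h3 : ∑ S ∈ A.powerset.filter (fun S => 2 ≤ S.card), ∏ j ∈ S, (- a j)
      ≤ ∑ S ∈ A.powerset.filter (fun S => 2 ≤ S.card), ∏ j ∈ S, a j := by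
    apply Finset.sum_le_sum
    intro S hS
    have hsub : S ⊆ A := Finset.mem_powerset.mp (Finset.mem_filter.mp hS).1
    calc ∏ j ∈ S, (- a j) ≤ |∏ j ∈ S, (- a j)| := le_abs_self _
      _ = ∏ j ∈ S, |(- a j)| := Finset.abs_prod S _
      _ = ∏ j ∈ S, a j := Finset.prod_congr rfl (fun j hj => by
          rw [abs_neg, abs_of_nonneg (h0 j (hsub hj))])
  linarith

lemma one_sub_sum_le_prod (s : Finset (Fin N)) (a : Fin N → ℝ) (h0 : ∀ i ∈ s, 0 ≤ a i)
    (h1 : ∀ i ∈ s, a i ≤ 1) :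
    1 - ∑ i ∈ s, a i ≤ ∏ i ∈ s, (1 - a i) := by
  classical
  induction s using Finset.cons_induction with
  | empty => simp
  | cons j s hj ih =>
    rw [Finset.prod_cons, Finset.sum_cons]
    have ih' := ih (fun i hi => h0 i (Finset.mem_cons_of_mem hi))
      (fun i hi => h1 i (Finset.mem_cons_of_mem hi))
    have hs : 0 ≤ ∑ i ∈ s, a i := Finset.sum_nonneg (fun i hi => h0 i (Finset.mem_cons_of_mem hi))
    have hj0 : 0 ≤ a j := h0 j (Finset.mem_cons_self _ _)
    have hj1 : a j ≤ 1 := h1 j (Finset.mem_cons_self _ _)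
    nlinarith [mul_nonneg (sub_nonneg.mpr hj1) (sub_nonneg.mpr ih'),
      mul_nonneg hj0 hs]

lemma exists_max_rel {α : Type*} (R : α → α → Prop)
    (htrans : ∀ a b c, R a b → R b c → R a c) :
    ∀ s : Finset α, s.Nonempty → (∀ a ∈ s, ∀ b ∈ s, R a b ∨ R b a) →
      ∃ m ∈ s, ∀ a ∈ s, R a m := by
  classical
  intro s
  induction s using Finset.cons_induction with
  | empty => intro h; simp at h
  | cons j t hj ih =>
    intro _ htot
    rcases t.eq_empty_or_nonempty with rfl | hne
    · refine ⟨j, Finset.mem_cons_self _ _, ?_⟩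
      intro a ha
      simp only [Finset.cons_empty, Finset.mem_singleton] at ha
      subst ha
      rcases htot a (Finset.mem_cons_self _ _) a (Finset.mem_cons_self _ _) with h | h <;> exact h
    · obtain ⟨m, hm, hmax⟩ := ih hne
        (fun a ha b hb => htot a (Finset.mem_cons_of_mem ha) b (Finset.mem_cons_of_mem hb))
      rcases htot j (Finset.mem_cons_self _ _) m (Finset.mem_cons_of_mem hm) with h | h
      · refine ⟨m, Finset.mem_cons_of_mem hm, ?_⟩
        intro a ha
        rcases Finset.mem_cons.mp ha with rfl | ha'
        · exact h
        · exact hmax a ha'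
      · refine ⟨j, Finset.mem_cons_self _ _, ?_⟩
        intro a ha
        rcases Finset.mem_cons.mp ha with rfl | ha'
        · rcases htot a (Finset.mem_cons_self _ _) a (Finset.mem_cons_self _ _) with h' | h' <;>
            exact h'
        · exact htrans a m j (hmax a ha') h

end Helpers

/-- Acquisition price offered to seller `j` at common cutoff `v`. -/
noncomputable def pAcq (F : Fin N → ℝ → ℝ) (r : ℝ) (j : Fin N) (v : ℝ) : ℝ :=
  v + ∫ x in v..r, ∏ i ∈ Finset.univ.erase j, (1 - F i x)

/-- Speculator's expected receipt from the auction when exactly the sellers in `S ⊆ A`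
accepted the acquisition offer. -/
noncomputable def receipt (F : Fin N → ℝ → ℝ) (r : ℝ) (A S : Finset (Fin N))
    (v : ℝ) : ℝ :=
  (∫ x in (0 : ℝ)..v, ∏ i ∈ Finset.univ \ A, (1 - F i x)) +
    ∫ x in v..r,
      (∏ i ∈ Finset.univ \ S, (1 - F i x)) / ∏ j ∈ A \ S, (1 - F j v)

/-- Speculator's expected profit with limited access `A` and common cutoff `v`. -/
noncomputable def PiAsym (F : Fin N → ℝ → ℝ) (r : ℝ) (A : Finset (Fin N))
    (v : ℝ) : ℝ :=
  (∑ S ∈ A.powerset.filter Finset.Nonempty,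
      (∏ j ∈ S, F j v) * (∏ j ∈ A \ S, (1 - F j v)) * receipt F r A S v)
    - ∑ j ∈ A, F j v * pAcq F r j v

set_option maxHeartbeats 1000000 in
lemma piAsym_eq (F : Fin N → ℝ → ℝ) (r v : ℝ) (A : Finset (Fin N))
    (hd : ∀ j ∈ A, F j v < 1) :
    PiAsym F r A v
      = (1 - ∏ j ∈ A, (1 - F j v)) * (∫ x in (0:ℝ)..v, ∏ i ∈ Finset.univ \ A, (1 - F i x))
        - v * ∑ j ∈ A, F j v
        + ∑ S ∈ A.powerset.filter (fun S => 2 ≤ S.card),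
            (∏ j ∈ S, F j v) * ∫ x in v..r, ∏ i ∈ Finset.univ \ S, (1 - F i x) := by
  classical
  set J0 : ℝ := ∫ x in (0:ℝ)..v, ∏ i ∈ Finset.univ \ A, (1 - F i x) with hJ0
  set K : Finset (Fin N) → ℝ := fun S => ∫ x in v..r, ∏ i ∈ Finset.univ \ S, (1 - F i x) with hK
  have hterm : ∀ S ∈ A.powerset.filter Finset.Nonempty,
      (∏ j ∈ S, F j v) * (∏ j ∈ A \ S, (1 - F j v)) * receipt F r A S v
        = (∏ j ∈ S, F j v) * (∏ j ∈ A \ S, (1 - F j v)) * J0 + (∏ j ∈ S, F j v) * K S := by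
    intro S hS
    have hd' : (∏ j ∈ A \ S, (1 - F j v)) ≠ 0 := by
      apply ne_of_gt
      apply Finset.prod_pos
      intro j hj
      have := hd j (Finset.mem_sdiff.mp hj).1
      linarith
    have hrec : receipt F r A S v = J0 + K S / (∏ j ∈ A \ S, (1 - F j v)) := by
      rw [receipt, intervalIntegral.integral_div]
    rw [hrec]
    field_simp
  have hsum1 : ∑ S ∈ A.powerset.filter Finset.Nonempty,
      (∏ j ∈ S, F j v) * (∏ j ∈ A \ S, (1 - F j v)) = 1 - ∏ j ∈ A, (1 - F j v) :=
    sum_NE_prod A (fun j => F j v)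
  have hcost : ∀ j ∈ A, F j v * pAcq F r j v = F j v * v + F j v * K {j} := by
    intro j _
    rw [pAcq, Finset.erase_eq]
    ring
  rw [PiAsym, Finset.sum_congr rfl hterm, Finset.sum_add_distrib, ← Finset.sum_mul, hsum1,
      sum_split A (fun S => (∏ j ∈ S, F j v) * K S), Finset.sum_congr rfl hcost,
      Finset.sum_add_distrib]
  simp only [Finset.prod_singleton]
  have hvs : ∑ j ∈ A, F j v * v = v * ∑ j ∈ A, F j v := by
    rw [Finset.mul_sum]
    exact Finset.sum_congr rfl (fun j _ => mul_comm _ _)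
  rw [hvs]
  ring

set_option maxHeartbeats 1000000 in
/-- Speculation with limited access to asymmetric sellers is profitable in
second-price auctions. -/
theorem speculation_profitable_asymmetric_SPA
    (N : ℕ) (hN : 2 ≤ N) (F : Fin N → ℝ → ℝ)
    (hFcont : ∀ i, Continuous (F i)) (hFmono : ∀ i, Monotone (F i))
    (hF0 : ∀ i, F i 0 = 0) (hFpos : ∀ i, ∀ v ∈ Ioc (0 : ℝ) 1, 0 < F i v)
    (hFlt1 : ∀ i, ∀ v ∈ Ico (0 : ℝ) 1, F i v < 1) (hF1 : ∀ i, F i 1 = 1)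
    (r : ℝ) (hr : r ∈ Ioc (0 : ℝ) 1)
    (A : Finset (Fin N)) (hA : A.Nonempty)
    (k k' : Fin N) (hk : k ∈ A) (hk' : k' ∈ A) (hkk' : k ≠ k')
    (hlimk : ∀ i ∈ Finset.univ \ A,
      Tendsto (fun v => v * F i v / F k v) (nhdsWithin 0 (Ioi 0)) (nhds 0))
    (hlimk' : ∀ i ∈ Finset.univ \ A,
      Tendsto (fun v => v * F i v / F k' v) (nhdsWithin 0 (Ioi 0)) (nhds 0))
    (hratio : ∀ j ∈ A, ∀ j' ∈ A, ∃ L : EReal, 0 ≤ L ∧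
      Tendsto (fun v => ((F j v / F j' v : ℝ) : EReal)) (nhdsWithin 0 (Ioi 0))
        (nhds L)) :
    ∃ v ∈ Ioc (0 : ℝ) r, 0 < PiAsym F r A v := by
  classical
  obtain ⟨hrpos, hrle1⟩ := hr
  set r₀ : ℝ := r / 2 with hr₀def
  have hr₀pos : 0 < r₀ := by positivity
  have hr₀lt1 : r₀ < 1 := by rw [hr₀def]; linarith
  have hr₀r : r₀ ≤ r := by rw [hr₀def]; linarith
  have hF0le : ∀ (i : Fin N) (x : ℝ), 0 ≤ x → 0 ≤ F i x := fun i x hx => by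
    have := hFmono i hx; rwa [hF0 i] at this
  have hFle1 : ∀ (i : Fin N) (x : ℝ), x ≤ 1 → F i x ≤ 1 := fun i x hx => by
    have := hFmono i hx; rwa [hF1 i] at this
  set c : ℝ := ∏ i, (1 - F i r₀) with hcdef
  have hcpos : 0 < c := Finset.prod_pos fun i _ => by
    have := hFlt1 i r₀ ⟨hr₀pos.le, hr₀lt1⟩; linarith
  have hcle1 : c ≤ 1 := Finset.prod_le_one
    (fun i _ => by have := hFle1 i r₀ hr₀lt1.le; linarith)
    (fun i _ => by have := hF0le i r₀ hr₀pos.le; linarith)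
  have hIocev : ∀ᶠ w in nhdsWithin (0:ℝ) (Ioi 0), w ∈ Ioc (0:ℝ) 1 :=
    eventually_mem_set.mpr (Ioc_mem_nhdsGT_of_mem ⟨le_refl 0, one_pos⟩)
  -- the dominance relation
  set R : Fin N → Fin N → Prop :=
    fun j j' => ∃ M : ℝ, 0 < M ∧ ∀ᶠ w in nhdsWithin (0:ℝ) (Ioi 0), F j w ≤ M * F j' w with hRdef
  have hRtrans : ∀ a b c', R a b → R b c' → R a c' := by
    rintro a b c' ⟨M1, hM1, h1⟩ ⟨M2, hM2, h2⟩
    refine ⟨M1 * M2, by positivity, ?_⟩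
    filter_upwards [h1, h2] with w hw1 hw2
    calc F a w ≤ M1 * F b w := hw1
      _ ≤ M1 * (M2 * F c' w) := by nlinarith
      _ = M1 * M2 * F c' w := by ring
  have hRtot : ∀ j ∈ A, ∀ j' ∈ A, R j j' ∨ R j' j := by
    intro j hj j' hj'
    obtain ⟨L, hL0, hLlim⟩ := hratio j hj j' hj'
    by_cases hLtop : L = ⊤
    · right
      refine ⟨1, one_pos, ?_⟩
      have h1 : ∀ᶠ w in nhdsWithin (0:ℝ) (Ioi 0),
          (1 : EReal) < ((F j w / F j' w : ℝ) : EReal) := by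
        apply hLlim.eventually_const_lt
        rw [hLtop]
        exact_mod_cast EReal.coe_lt_top 1
      filter_upwards [h1, hIocev] with w hw hmem
      have hpos' : 0 < F j' w := hFpos j' w hmem
      have h2 : (1:ℝ) < F j w / F j' w := by exact_mod_cast hw
      have h3 := (one_lt_div hpos').mp h2
      linarith
    · left
      have hLbot : L ≠ ⊥ := fun hb => by rw [hb] at hL0; simp at hL0
      lift L to ℝ using ⟨hLtop, hLbot⟩
      have hL0' : (0:ℝ) ≤ L := by exact_mod_cast hL0
      refine ⟨L + 1, by linarith, ?_⟩
      have h1 : ∀ᶠ w in nhdsWithin (0:ℝ) (Ioi 0),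
          ((F j w / F j' w : ℝ) : EReal) < ((L + 1 : ℝ) : EReal) := by
        apply hLlim.eventually_lt_const
        exact_mod_cast lt_add_one L
      filter_upwards [h1, hIocev] with w hw hmem
      have hpos' : 0 < F j' w := hFpos j' w hmem
      have h2 : F j w / F j' w < L + 1 := by exact_mod_cast hw
      exact ((div_lt_iff₀ hpos').mp h2).le
  obtain ⟨j₁, hj₁A, hj₁max⟩ := exists_max_rel R hRtrans A hA hRtot
  obtain ⟨kst, hkstA, hkstne, hlimst⟩ :
      ∃ kst, kst ∈ A ∧ kst ≠ j₁ ∧ ∀ i ∈ Finset.univ \ A,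
        Tendsto (fun w => w * F i w / F kst w) (nhdsWithin (0:ℝ) (Ioi 0)) (nhds 0) := by
    rcases eq_or_ne k j₁ with h | h
    · exact ⟨k', hk', by rw [← h]; exact hkk'.symm, hlimk'⟩
    · exact ⟨k, hk, h, hlimk⟩
  have herase : (A.erase j₁).Nonempty := ⟨kst, Finset.mem_erase.mpr ⟨hkstne, hkstA⟩⟩
  obtain ⟨j₂, hj₂mem, hj₂max⟩ := exists_max_rel R hRtrans (A.erase j₁) herase
    (fun a ha b hb => hRtot a (Finset.mem_of_mem_erase ha) b (Finset.mem_of_mem_erase hb))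
  have hj₂A : j₂ ∈ A := Finset.mem_of_mem_erase hj₂mem
  have hj₂ne : j₂ ≠ j₁ := (Finset.mem_erase.mp hj₂mem).1
  have hRkst : R kst j₂ := hj₂max kst (Finset.mem_erase.mpr ⟨hkstne, hkstA⟩)
  -- smallness of cross terms
  set δ : ℝ := (c * r₀ / 4) / ((N:ℝ) * N + 1) with hδdef
  have hδpos : 0 < δ := by rw [hδdef]; positivity
  have hpair : ∀ j ∈ A, ∀ i ∈ Finset.univ \ A,
      ∀ᶠ w in nhdsWithin (0:ℝ) (Ioi 0),
        F j w * (w * F i w) ≤ δ * (F j₁ w * F j₂ w) := by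
    intro j hj i hi
    obtain ⟨Mj, hMj, hevj⟩ := hj₁max j hj
    obtain ⟨Ms, hMs, hevs⟩ := hRkst
    have hε : 0 < δ / (Mj * Ms) := by positivity
    have hev0 := (hlimst i hi).eventually_lt_const hε
    filter_upwards [hevj, hevs, hev0, hIocev] with w hw1 hw2 hw3 hw4
    have hkpos : 0 < F kst w := hFpos kst w hw4
    have h5 : w * F i w < δ / (Mj * Ms) * F kst w := (div_lt_iff₀ hkpos).mp hw3
    have h6 : w * F i w ≤ δ / (Mj * Ms) * (Ms * F j₂ w) := by nlinarith
    have h7 : 0 ≤ w * F i w := mul_nonneg hw4.1.le (hF0le i w hw4.1.le)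
    have h8 : 0 ≤ Mj * F j₁ w := mul_nonneg hMj.le (hF0le j₁ w hw4.1.le)
    calc F j w * (w * F i w) ≤ (Mj * F j₁ w) * (δ / (Mj * Ms) * (Ms * F j₂ w)) :=
        mul_le_mul hw1 h6 h7 h8
      _ = δ * (F j₁ w * F j₂ w) := by field_simp
  have hpairs : ∀ᶠ w in nhdsWithin (0:ℝ) (Ioi 0), ∀ j ∈ A, ∀ i ∈ Finset.univ \ A,
      F j w * (w * F i w) ≤ δ * (F j₁ w * F j₂ w) := by
    rw [eventually_all_finset]
    intro j hj
    rw [eventually_all_finset]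
    intro i hi
    exact hpair j hj i hi
  have hsmallev : ∀ᶠ w in nhdsWithin (0:ℝ) (Ioi 0),
      w ∈ Ioc (0:ℝ) (min (r₀/2) (c*r₀/4)) :=
    eventually_mem_set.mpr (Ioc_mem_nhdsGT_of_mem ⟨le_refl 0, by positivity⟩)
  obtain ⟨v, hvmem, hvp⟩ := (hsmallev.and hpairs).exists
  obtain ⟨hv0, hvle⟩ := hvmem
  have hvr₀2 : v ≤ r₀ / 2 := hvle.trans (min_le_left _ _)
  have hvc4 : v ≤ c * r₀ / 4 := hvle.trans (min_le_right _ _)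
  have hvr₀ : v ≤ r₀ := by linarith
  have hvlt1 : v < 1 := by linarith
  have hvler : v ≤ r := by linarith
  refine ⟨v, ⟨hv0, hvler⟩, ?_⟩
  have hcontprod : ∀ s : Finset (Fin N), Continuous fun x => ∏ i ∈ s, (1 - F i x) :=
    fun s => continuous_finset_prod s (fun i _ => continuous_const.sub (hFcont i))
  have hid := piAsym_eq F r v A (fun j _ => hFlt1 j v ⟨hv0.le, hvlt1⟩)
  rw [hid]
  set J0 : ℝ := ∫ x in (0:ℝ)..v, ∏ i ∈ Finset.univ \ A, (1 - F i x) with hJ0def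
  set Sa : ℝ := ∑ j ∈ A, F j v with hSadef
  set D : ℝ := ∑ i ∈ Finset.univ \ A, F i v with hDdef
  set Q : ℝ := ∑ S ∈ A.powerset.filter (fun S => 2 ≤ S.card), ∏ j ∈ S, F j v with hQdef
  -- bounds on J0
  have hJ0nonneg : 0 ≤ J0 := by
    rw [hJ0def]
    exact intervalIntegral.integral_nonneg hv0.le
      (fun x hx => Finset.prod_nonneg fun i _ => by
        have := hFle1 i x (le_trans hx.2 hvlt1.le); linarith)
  have hJ0le : J0 ≤ v := by
    rw [hJ0def]
    have h := intervalIntegral.integral_mono_on (μ := volume)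
      (f := fun x => ∏ i ∈ Finset.univ \ A, (1 - F i x)) (g := fun _ => (1:ℝ)) hv0.le
      ((hcontprod _).intervalIntegrable _ _) intervalIntegrable_const
      (fun x hx => Finset.prod_le_one
        (fun i _ => by have := hFle1 i x (le_trans hx.2 hvlt1.le); linarith)
        (fun i _ => by have := hF0le i x hx.1; linarith))
    simpa using h
  have hJ0ge : v * (1 - D) ≤ J0 := by
    rw [hJ0def]
    have hptwise : ∀ x ∈ Icc (0:ℝ) v,
        (fun _ : ℝ => (1 - D : ℝ)) x ≤ ∏ i ∈ Finset.univ \ A, (1 - F i x) := by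
      intro x hx
      have hle : ∑ i ∈ Finset.univ \ A, F i x ≤ D := by
        rw [hDdef]
        exact Finset.sum_le_sum fun i _ => hFmono i hx.2
      calc (fun _ : ℝ => (1 - D : ℝ)) x = 1 - D := rfl
        _ ≤ 1 - ∑ i ∈ Finset.univ \ A, F i x := by linarith
        _ ≤ ∏ i ∈ Finset.univ \ A, (1 - F i x) :=
          one_sub_sum_le_prod _ _ (fun i _ => hF0le i x hx.1)
            (fun i _ => hFle1 i x (le_trans hx.2 hvlt1.le))
    have h := intervalIntegral.integral_mono_on (μ := volume)
      (f := fun _ => (1 - D : ℝ)) (g := fun x => ∏ i ∈ Finset.univ \ A, (1 - F i x)) hv0.le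
      intervalIntegrable_const ((hcontprod _).intervalIntegrable _ _) hptwise
    rw [intervalIntegral.integral_const, smul_eq_mul] at h
    calc v * (1 - D) = (v - 0) * (1 - D) := by ring
      _ ≤ _ := h
  -- lower bound for the tail integrals
  have hKge : ∀ S : Finset (Fin N),
      c * (r₀ - v) ≤ ∫ x in v..r, ∏ i ∈ Finset.univ \ S, (1 - F i x) := by
    intro S
    have hint1 : IntervalIntegrable (fun x => ∏ i ∈ Finset.univ \ S, (1 - F i x)) volume v r₀ :=
      (hcontprod _).intervalIntegrable _ _
    have hint2 : IntervalIntegrable (fun x => ∏ i ∈ Finset.univ \ S, (1 - F i x)) volume r₀ r :=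
      (hcontprod _).intervalIntegrable _ _
    have hsplit := intervalIntegral.integral_add_adjacent_intervals hint1 hint2
    have hptwise : ∀ x ∈ Icc v r₀,
        (fun _ : ℝ => c) x ≤ ∏ i ∈ Finset.univ \ S, (1 - F i x) := by
      intro x hx
      have hx0 : 0 ≤ x := le_trans hv0.le hx.1
      have h2 : c ≤ ∏ i, (1 - F i x) := by
        rw [hcdef]
        apply Finset.prod_le_prod
        · intro i _
          have := hFle1 i r₀ hr₀lt1.le; linarith
        · intro i _
          have := hFmono i hx.2; linarith
      have h3 : (∏ i, (1 - F i x)) ≤ ∏ i ∈ Finset.univ \ S, (1 - F i x) := by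
        rw [← Finset.prod_sdiff (Finset.subset_univ S)]
        have hS1 : ∏ i ∈ S, (1 - F i x) ≤ 1 := Finset.prod_le_one
          (fun i _ => by have := hFle1 i x (le_trans hx.2 hr₀lt1.le); linarith)
          (fun i _ => by have := hF0le i x hx0; linarith)
        have hSnn : 0 ≤ ∏ i ∈ Finset.univ \ S, (1 - F i x) := Finset.prod_nonneg
          (fun i _ => by have := hFle1 i x (le_trans hx.2 hr₀lt1.le); linarith)
        nlinarith
      exact le_trans h2 h3
    have h1 : c * (r₀ - v) ≤ ∫ x in v..r₀, ∏ i ∈ Finset.univ \ S, (1 - F i x) := by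
      have h := intervalIntegral.integral_mono_on (μ := volume)
        (f := fun _ => c) (g := fun x => ∏ i ∈ Finset.univ \ S, (1 - F i x)) hvr₀
        intervalIntegrable_const hint1 hptwise
      rw [intervalIntegral.integral_const, smul_eq_mul] at h
      linarith [mul_comm c (r₀ - v)]
    have h2 : 0 ≤ ∫ x in r₀..r, ∏ i ∈ Finset.univ \ S, (1 - F i x) :=
      intervalIntegral.integral_nonneg hr₀r
        (fun x hx => Finset.prod_nonneg fun i _ => by
          have := hFle1 i x (le_trans hx.2 hrle1); linarith)
    linarith [hsplit]
  -- positivity and comparisons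
  have hFj₁pos : 0 < F j₁ v := hFpos j₁ v ⟨hv0, hvlt1.le⟩
  have hFj₂pos : 0 < F j₂ v := hFpos j₂ v ⟨hv0, hvlt1.le⟩
  have hSa0 : 0 ≤ Sa := by
    rw [hSadef]; exact Finset.sum_nonneg fun j _ => hF0le j v hv0.le
  have hQ0 : 0 ≤ Q := by
    rw [hQdef]
    exact Finset.sum_nonneg fun S _ => Finset.prod_nonneg fun j _ => hF0le j v hv0.le
  have hQge : F j₁ v * F j₂ v ≤ Q := by
    have hmem : ({j₁, j₂} : Finset (Fin N)) ∈ A.powerset.filter (fun S => 2 ≤ S.card) := by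
      rw [Finset.mem_filter, Finset.mem_powerset]
      constructor
      · intro x hx
        rcases Finset.mem_insert.mp hx with rfl | hx
        · exact hj₁A
        · rw [Finset.mem_singleton.mp hx]; exact hj₂A
      · exact (Finset.card_pair hj₂ne.symm).ge
    have h := Finset.single_le_sum (f := fun S => ∏ j ∈ S, F j v)
      (fun S _ => Finset.prod_nonneg fun j _ => hF0le j v hv0.le) hmem
    rw [hQdef]
    simpa [Finset.prod_pair hj₂ne.symm] using h
  have hBon : ∏ j ∈ A, (1 - F j v) ≤ 1 - Sa + Q := by
    rw [hSadef, hQdef]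
    exact prod_one_sub_le A (fun j => F j v) (fun j _ => hF0le j v hv0.le)
  have hsumK : Q * (c * (r₀ - v)) ≤ ∑ S ∈ A.powerset.filter (fun S => 2 ≤ S.card),
      (∏ j ∈ S, F j v) * ∫ x in v..r, ∏ i ∈ Finset.univ \ S, (1 - F i x) := by
    rw [hQdef, Finset.sum_mul]
    exact Finset.sum_le_sum fun S _ => mul_le_mul_of_nonneg_left (hKge S)
      (Finset.prod_nonneg fun j _ => hF0le j v hv0.le)
  have h1 : (Sa - Q) * J0 ≤ (1 - ∏ j ∈ A, (1 - F j v)) * J0 :=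
    mul_le_mul_of_nonneg_right (by linarith) hJ0nonneg
  -- the key strict inequality at v
  have hineq : Sa * (v * D) < c * r₀ / 4 * (F j₁ v * F j₂ v) := by
    have hexp : Sa * (v * D) = ∑ j ∈ A, ∑ i ∈ Finset.univ \ A, F j v * (v * F i v) := by
      rw [hSadef, hDdef, Finset.sum_mul]
      refine Finset.sum_congr rfl fun j _ => ?_
      rw [Finset.mul_sum, Finset.mul_sum]
    rw [hexp]
    have hb1 : ∑ j ∈ A, ∑ i ∈ Finset.univ \ A, F j v * (v * F i v)
        ≤ ∑ j ∈ A, ∑ i ∈ Finset.univ \ A, δ * (F j₁ v * F j₂ v) :=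
      Finset.sum_le_sum fun j hj => Finset.sum_le_sum fun i hi => hvp j hj i hi
    have hb2 : ∑ j ∈ A, ∑ i ∈ Finset.univ \ A, δ * (F j₁ v * F j₂ v)
        = (A.card : ℝ) * ((Finset.univ \ A).card : ℝ) * (δ * (F j₁ v * F j₂ v)) := by
      simp [Finset.sum_const, nsmul_eq_mul]
      ring
    have hcard1 : (A.card : ℝ) ≤ (N : ℝ) := by
      exact_mod_cast (Finset.card_le_univ A).trans_eq (Finset.card_fin N)
    have hcard2 : ((Finset.univ \ A).card : ℝ) ≤ (N : ℝ) := by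
      exact_mod_cast (Finset.card_le_univ _).trans_eq (Finset.card_fin N)
    have hδeq : ((N:ℝ) * N + 1) * δ = c * r₀ / 4 := by
      rw [hδdef]; field_simp
    have hm : (A.card : ℝ) * ((Finset.univ \ A).card : ℝ) ≤ (N:ℝ) * N :=
      mul_le_mul hcard1 hcard2 (Nat.cast_nonneg _) (Nat.cast_nonneg _)
    have hcc : (A.card : ℝ) * ((Finset.univ \ A).card : ℝ) * δ < c * r₀ / 4 := by
      nlinarith [hδpos, hm, hδeq]
    have hPpos : 0 < F j₁ v * F j₂ v := mul_pos hFj₁pos hFj₂pos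
    calc ∑ j ∈ A, ∑ i ∈ Finset.univ \ A, F j v * (v * F i v)
        ≤ (A.card : ℝ) * ((Finset.univ \ A).card : ℝ) * (δ * (F j₁ v * F j₂ v)) := by
          rw [← hb2]; exact hb1
      _ = ((A.card : ℝ) * ((Finset.univ \ A).card : ℝ) * δ) * (F j₁ v * F j₂ v) := by ring
      _ < c * r₀ / 4 * (F j₁ v * F j₂ v) := by
          exact mul_lt_mul_of_pos_right hcc hPpos
  -- final assembly
  have t1 : Sa * (-(v * D)) ≤ Sa * (J0 - v) := by
    have hD' : -(v * D) ≤ J0 - v := by nlinarith [hJ0ge]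
    exact mul_le_mul_of_nonneg_left hD' hSa0
  have hgap : c * r₀ / 4 ≤ c * (r₀ - v) - J0 := by
    have hcv : c * v ≤ v := by nlinarith
    have hexp : c * (r₀ - v) = c * r₀ - c * v := by ring
    have hcr : (0:ℝ) ≤ c * r₀ := by positivity
    linarith [hcv, hJ0le, hvc4, hexp, hcr]
  have t2 : Q * (c * r₀ / 4) ≤ Q * (c * (r₀ - v) - J0) := mul_le_mul_of_nonneg_left hgap hQ0
  have t3 : (F j₁ v * F j₂ v) * (c * r₀ / 4) ≤ Q * (c * r₀ / 4) :=
    mul_le_mul_of_nonneg_right hQge (by positivity)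
  linarith [t1, t2, t3, hineq, h1, hsumK]
end

section
/- For every seller j ∈ A and every cutoff vector (v_s*)_{s∈A} ∈ [0,r]^A, the simple-speculation acquisition price exceeds the enhanced-speculation acquisition price by p_j*(𝐯*) − p̄_j*(𝐯*) = ∫₀^{v_j*} { 1 − ∏_{s ∈ A∖{j}} (1 − F_s(min(x, v_s*))) } dx. In particular, if v_j* > 0 and v_s* > 0 for some s ∈ A∖{j}, then p_j*(𝐯*) > p̄_j*(𝐯*). -/
/-! The two prices share the integral over `[v_j*, r]`, so their difference is
`v_j* - ∫₀^{v_j*} g` with `g x = ∏_{s ∈ A∖{j}} (1 - F_s(min(x, v_s*)))`, i.e. `∫₀^{v_j*} (1 - g)`.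
Each factor of `g` lies in `[0, 1]`, and for `x > 0` the factor of a seller `s` with `v_s* > 0`
is `< 1` since `F_s > 0` on `(0, 1]`; so `1 - g > 0` on `(0, v_j*]` and the integral is positive. -/

open MeasureTheory Set

variable {N : ℕ}

/-- Simple-speculation acquisition price for seller `j`, given cutoff vector `vstar`. -/
noncomputable def pSimple (F : Fin N → ℝ → ℝ) (r : ℝ) (A : Finset (Fin N))
    (vstar : Fin N → ℝ) (j : Fin N) : ℝ :=
  vstar j + ∫ x in (vstar j)..r,
    (∏ i ∈ Finset.univ \ A, (1 - F i x)) *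
      ∏ s ∈ A.erase j, (1 - F s (max x (vstar s)))

/-- Enhanced-speculation acquisition price for seller `j` (the speculator later resells
surplus items back to accepting sellers via a VCG auction). -/
noncomputable def pEnhanced (F : Fin N → ℝ → ℝ) (r : ℝ) (A : Finset (Fin N))
    (vstar : Fin N → ℝ) (j : Fin N) : ℝ :=
  (∫ x in (0 : ℝ)..(vstar j), ∏ s ∈ A.erase j, (1 - F s (min x (vstar s)))) +
    ∫ x in (vstar j)..r,
      (∏ i ∈ Finset.univ \ A, (1 - F i x)) *
        ∏ s ∈ A.erase j, (1 - F s (max x (vstar s)))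

theorem Finset.prod_lt_one_of_mem_Icc {ι R : Type*} [CommSemiring R] [LinearOrder R]
    [IsStrictOrderedRing R] {s : Finset ι} {f : ι → R} (hf : ∀ i ∈ s, f i ∈ Set.Icc 0 1)
    {i₀ : ι} (hi₀ : i₀ ∈ s) (hlt : f i₀ < 1) : ∏ i ∈ s, f i < 1 := by
  classical
  calc ∏ i ∈ s, f i = f i₀ * ∏ i ∈ s.erase i₀, f i := (Finset.mul_prod_erase s f hi₀).symm
    _ ≤ f i₀ := mul_le_of_le_one_right (hf i₀ hi₀).1 <|
        Finset.prod_le_one (fun i hi => (hf i (Finset.mem_of_mem_erase hi)).1)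
          (fun i hi => (hf i (Finset.mem_of_mem_erase hi)).2)
    _ < 1 := hlt

theorem one_sub_mem_Icc_of_monotone {F : ℝ → ℝ} (hmono : Monotone F) (h0 : F 0 = 0)
    (h1 : F 1 = 1) {v : ℝ} (hv : v ∈ Icc 0 1) : 1 - F v ∈ Icc 0 1 := by
  have hFv := hmono.mapsTo_Icc hv
  rw [h0, h1] at hFv
  constructor <;> linarith [hFv.1, hFv.2]

variable (F : Fin N → ℝ → ℝ) (A : Finset (Fin N)) (vstar : Fin N → ℝ) (j : Fin N)

theorem continuous_prod_one_sub_min (hFcont : ∀ i, Continuous (F i)) :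
    Continuous fun x => ∏ s ∈ A.erase j, (1 - F s (min x (vstar s))) := by
  fun_prop

theorem pSimple_sub_pEnhanced_eq_integral (r : ℝ)
    (hint : IntervalIntegrable (fun x => ∏ s ∈ A.erase j, (1 - F s (min x (vstar s))))
      volume 0 (vstar j)) :
    pSimple F r A vstar j - pEnhanced F r A vstar j =
      ∫ x in (0 : ℝ)..(vstar j), (1 - ∏ s ∈ A.erase j, (1 - F s (min x (vstar s)))) := by
  rw [intervalIntegral.integral_sub intervalIntegrable_const hint,
    intervalIntegral.integral_const, pSimple, pEnhanced]
  simp only [sub_zero, smul_eq_mul, mul_one]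
  ring

theorem prod_one_sub_min_lt_one (hFmono : ∀ i, Monotone (F i)) (hF0 : ∀ i, F i 0 = 0)
    (hFpos : ∀ i, ∀ v ∈ Ioc (0 : ℝ) 1, 0 < F i v) (hF1 : ∀ i, F i 1 = 1)
    (hvstar : ∀ s ∈ A.erase j, vstar s ∈ Icc (0 : ℝ) 1) {s₀ : Fin N} (hs₀ : s₀ ∈ A.erase j)
    (hs₀pos : 0 < vstar s₀) {x : ℝ} (hx : 0 < x) :
    ∏ s ∈ A.erase j, (1 - F s (min x (vstar s))) < 1 := by
  refine Finset.prod_lt_one_of_mem_Icc (fun s hs => ?_) hs₀ ?_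
  · exact one_sub_mem_Icc_of_monotone (hFmono s) (hF0 s) (hF1 s)
      ⟨le_min hx.le (hvstar s hs).1, (min_le_right _ _).trans (hvstar s hs).2⟩
  · have := hFpos s₀ _ ⟨lt_min hx hs₀pos, (min_le_right _ _).trans (hvstar s₀ hs₀).2⟩
    linarith

theorem pSimple_sub_pEnhanced_general
    (N : ℕ) (F : Fin N → ℝ → ℝ)
    (hFcont : ∀ i, Continuous (F i)) (hFmono : ∀ i, Monotone (F i))
    (hF0 : ∀ i, F i 0 = 0) (hFpos : ∀ i, ∀ v ∈ Ioc (0 : ℝ) 1, 0 < F i v)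
    (hF1 : ∀ i, F i 1 = 1)
    (r : ℝ) (hr : r ∈ Ioc (0 : ℝ) 1)
    (A : Finset (Fin N))
    (vstar : Fin N → ℝ) (hvstar : ∀ s ∈ A, vstar s ∈ Icc (0 : ℝ) r) :
    ∀ j ∈ A,
      (pSimple F r A vstar j - pEnhanced F r A vstar j =
        ∫ x in (0 : ℝ)..(vstar j),
          (1 - ∏ s ∈ A.erase j, (1 - F s (min x (vstar s))))) ∧
      (0 < vstar j → (∃ s ∈ A.erase j, 0 < vstar s) →
        pEnhanced F r A vstar j < pSimple F r A vstar j) := by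
  intro j _
  have hcont := continuous_prod_one_sub_min F A vstar j hFcont
  have heq := pSimple_sub_pEnhanced_eq_integral F A vstar j r (hcont.intervalIntegrable _ _)
  refine ⟨heq, fun hvj ⟨s₀, hs₀, hs₀pos⟩ => ?_⟩
  have hvstar₁ : ∀ s ∈ A.erase j, vstar s ∈ Icc (0 : ℝ) 1 := fun s hs =>
    have hvs := hvstar s (Finset.mem_of_mem_erase hs)
    ⟨hvs.1, hvs.2.trans hr.2⟩
  rw [← sub_pos, heq]
  refine intervalIntegral.intervalIntegral_pos_of_pos_on
    ((continuous_const.sub hcont).intervalIntegrable _ _) (fun x hx => ?_) hvj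
  exact sub_pos.2 <| prod_one_sub_min_lt_one F A vstar j hFmono hF0 hFpos hF1 hvstar₁ hs₀
    hs₀pos hx.1

/-- The simple-speculation price exceeds the enhanced-speculation price by the expected
value of the option to win one's item back, and strictly so when the relevant cutoffs
are positive. -/
theorem pSimple_sub_pEnhanced
    (N : ℕ) (hN : 2 ≤ N) (F : Fin N → ℝ → ℝ)
    (hFcont : ∀ i, Continuous (F i)) (hFmono : ∀ i, Monotone (F i))
    (hF0 : ∀ i, F i 0 = 0) (hFpos : ∀ i, ∀ v ∈ Ioc (0 : ℝ) 1, 0 < F i v)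
    (hF1 : ∀ i, F i 1 = 1)
    (r : ℝ) (hr : r ∈ Ioc (0 : ℝ) 1)
    (A : Finset (Fin N)) (hA : 2 ≤ A.card)
    (vstar : Fin N → ℝ) (hvstar : ∀ s ∈ A, vstar s ∈ Icc (0 : ℝ) r) :
    ∀ j ∈ A,
      (pSimple F r A vstar j - pEnhanced F r A vstar j =
        ∫ x in (0 : ℝ)..(vstar j),
          (1 - ∏ s ∈ A.erase j, (1 - F s (min x (vstar s))))) ∧
      (0 < vstar j → (∃ s ∈ A.erase j, 0 < vstar s) →
        pEnhanced F r A vstar j < pSimple F r A vstar j) :=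
  pSimple_sub_pEnhanced_general N F hFcont hFmono hF0 hFpos hF1 r hr A vstar hvstar
end

section
/- Complete knockout is strictly unprofitable for the speculator in the first-price auction: the first-price profit function evaluated at the cutoff v⋆ = r equals Π⋆(r) = [1 − (1 − F(r))^N − N F(r)] · r, and this quantity is strictly negative. -/
open MeasureTheory Set

/-- Speculator's expected profit in the first-price speculation game at cutoff `v`. -/
noncomputable def PiFPA (F : ℝ → ℝ) (N : ℕ) (r : ℝ) (v : ℝ) : ℝ :=
  (∑ m ∈ Finset.Icc 1 (N - 1),
      (N.choose m : ℝ) * (1 - F v) ^ m * (F v) ^ (N - m) * ubarb F r m v)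
    + (F v) ^ N * r - N * F v * pFPA F N r v

lemma bern_strict (p : ℝ) (hp0 : 0 < p) (hp1 : p < 1) :
    ∀ N : ℕ, 2 ≤ N → 1 - (1 - p) ^ N - (N : ℝ) * p < 0 := by
  intro N hN
  induction N, hN using Nat.le_induction with
  | base => push_cast; nlinarith
  | succ n hn ih =>
    have h1 : (0:ℝ) < 1 - p := by linarith
    have hps : (1 - p) ^ (n + 1) = (1 - p) ^ n * (1 - p) := pow_succ _ _
    have key : (1 - (n:ℝ) * p) * (1 - p) < (1 - p) ^ n * (1 - p) :=
      mul_lt_mul_of_pos_right (by linarith) h1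
    have hn2 : (2:ℝ) ≤ (n:ℝ) := by exact_mod_cast hn
    push_cast
    nlinarith [key, hps, mul_pos hp0 hp0]

/-- Complete knockout (cutoff `v⋆ = r`) is strictly unprofitable in the first-price
auction. -/
theorem complete_knockout_unprofitable_FPA
    (F : ℝ → ℝ) (N : ℕ) (hN : 2 ≤ N)
    (hFcont : Continuous F) (hFmono : Monotone F)
    (hF0 : F 0 = 0) (hFpos : ∀ v ∈ Ioc (0 : ℝ) 1, 0 < F v)
    (hFlt1 : ∀ v ∈ Ico (0 : ℝ) 1, F v < 1) (hF1 : F 1 = 1)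
    (r : ℝ) (hr : r ∈ Ioc (0 : ℝ) 1) :
    PiFPA F N r r = (1 - (1 - F r) ^ N - N * F r) * r ∧
    PiFPA F N r r < 0 := by
  obtain ⟨hr0, hr1⟩ := hr
  have hub : ∀ m : ℕ, ubarb F r m r = r := by
    intro m
    simp [ubarb, Icc_self, image_singleton, G]
  have hp : pFPA F N r r = r := by
    simp [pFPA, hub, intervalIntegral.integral_same]
  set a := 1 - F r with ha
  set b := F r with hb
  have hab : a + b = 1 := by ring
  have hrange : Finset.range (N + 1) = insert 0 (insert N (Finset.Icc 1 (N - 1))) := by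
    ext x
    simp only [Finset.mem_range, Finset.mem_insert, Finset.mem_Icc]
    omega
  have h0notin : (0 : ℕ) ∉ insert N (Finset.Icc 1 (N - 1)) := by
    simp only [Finset.mem_insert, Finset.mem_Icc]
    omega
  have hNnotin : N ∉ Finset.Icc 1 (N - 1) := by
    simp only [Finset.mem_Icc]
    omega
  have hsum : ∑ m ∈ Finset.range (N + 1), (N.choose m : ℝ) * a ^ m * b ^ (N - m)
      = (a + b) ^ N := by
    rw [add_pow]
    exact Finset.sum_congr rfl fun m _ => by ring
  rw [hrange, Finset.sum_insert h0notin, Finset.sum_insert hNnotin, hab, one_pow] at hsum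
  have hf0 : (N.choose 0 : ℝ) * a ^ 0 * b ^ (N - 0) = b ^ N := by simp
  have hfN : (N.choose N : ℝ) * a ^ N * b ^ (N - N) = a ^ N := by simp
  rw [hf0, hfN] at hsum
  have hS : ∑ m ∈ Finset.Icc 1 (N - 1), (N.choose m : ℝ) * a ^ m * b ^ (N - m)
      = 1 - b ^ N - a ^ N := by linarith
  have hPi : PiFPA F N r r = (1 - a ^ N - (N : ℝ) * b) * r := by
    unfold PiFPA
    rw [hp]
    have : ∑ m ∈ Finset.Icc 1 (N - 1),
        (N.choose m : ℝ) * (1 - F r) ^ m * (F r) ^ (N - m) * ubarb F r m r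
        = (1 - b ^ N - a ^ N) * r := by
      rw [← hS, Finset.sum_mul]
      exact Finset.sum_congr rfl fun m _ => by rw [hub m]
    rw [this]
    ring
  constructor
  · rw [hPi]
  · rw [hPi]
    have hb0 : 0 < b := hFpos r ⟨hr0, hr1⟩
    have hb1 : b ≤ 1 := by
      rw [hb, ← hF1]; exact hFmono hr1
    have hneg : 1 - a ^ N - (N : ℝ) * b < 0 := by
      rcases eq_or_lt_of_le hb1 with h1 | h1
      · have hz : a = 0 := by rw [ha, ← h1]; ring
        rw [hz, zero_pow (by omega)]
        have : (2:ℝ) ≤ (N:ℝ) := by exact_mod_cast hN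
        nlinarith
      · have := bern_strict b hb0 h1 N hN
        simpa [ha] using this
    exact mul_neg_of_neg_of_pos hneg hr0
end
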